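/- arXiv:1909.01529 — 11 statements merged into one kernel-verified Lean document; each statement's English description precedes it below -/
import Mathlib

section
/- For a fourth order biquadratic tensor T ∈ ℝ^{d1×d2×d1×d2}, the map T ↦ max{ |⟨T, x⊗y⊗x⊗y⟩| : ‖x‖ = ‖y‖ = 1 } defines a norm on the space of biquadratic tensors of size d1×d2×d1×d2. -/
noncomputable section

/-- A fourth order tensor `T` of size `d1 × d2 × d1 × d2` is biquadratic. -/
def Biquadratic {d1 d2 : ℕ} (T : Fin d1 → Fin d2 → Fin d1 → Fin d2 → ℝ) : Prop :=
  ∀ i j p q, T i j p q = T p j i q ∧ T i j p q = T p q i j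

/-- `⟨T, x ⊗ y ⊗ x ⊗ y⟩`. -/
def bform {d1 d2 : ℕ} (T : Fin d1 → Fin d2 → Fin d1 → Fin d2 → ℝ)
    (x : Fin d1 → ℝ) (y : Fin d2 → ℝ) : ℝ :=
  ∑ i, ∑ j, ∑ p, ∑ q, T i j p q * x i * y j * x p * y q

/-- The spectral norm of a fourth order tensor. -/
noncomputable def bSpec {d1 d2 : ℕ} (T : Fin d1 → Fin d2 → Fin d1 → Fin d2 → ℝ) : ℝ :=
  sSup { r : ℝ | ∃ x : Fin d1 → ℝ, ∃ y : Fin d2 → ℝ,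
    (∑ i, x i ^ 2 = 1) ∧ (∑ j, y j ^ 2 = 1) ∧ r = |bform T x y| }

/-!
Homogeneity and the triangle inequality hold for every tensor, because `⟨T, x ⊗ y ⊗ x ⊗ y⟩` is
linear in `T`; the supremum is finite since the unit spheres are compact. Biquadraticity is only
needed for definiteness: if the form vanishes on the spheres, it vanishes everywhere by
homogeneity in `x` and `y`. For fixed `y` it is then a vanishing quadratic form in `x` whose
matrix is symmetric by `t_{ijpq} = t_{pjiq}`, so that matrix is zero; each of its entries is in
turn a vanishing quadratic form in `y`, with matrix `(t_{ijpq})_{j,q}` symmetric by the two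
symmetries combined, so `T = 0`.
-/

open Finset

theorem eq_zero_of_symm_of_forall_sum_mul_mul_eq_zero {ι K : Type*} [Fintype ι] [DecidableEq ι]
    [Field K] [CharZero K] {M : ι → ι → K} (hM : ∀ i j, M i j = M j i)
    (h : ∀ x : ι → K, ∑ i, ∑ j, M i j * x i * x j = 0) : M = 0 := by
  have hdiag : ∀ i, M i i = 0 := fun i => by
    simpa [Pi.single_apply] using h (Pi.single i 1)
  funext i j
  have hij := h (Pi.single i 1 + Pi.single j 1)
  simp only [Pi.add_apply, mul_add, sum_add_distrib, Pi.single_apply, mul_ite,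
    mul_one, mul_zero, sum_ite_eq', mem_univ, if_true] at hij
  rw [hdiag, hdiag, hM j i] at hij
  simpa using hij

def euclideanUnitSphere (ι : Type*) [Fintype ι] : Set (ι → ℝ) := {x | ∑ i, x i ^ 2 = 1}

theorem isCompact_euclideanUnitSphere (ι : Type*) [Fintype ι] :
    IsCompact (euclideanUnitSphere ι) := by
  refine Metric.isCompact_of_isClosed_isBounded
    (isClosed_eq (by fun_prop) continuous_const) ?_
  refine (Metric.isBounded_closedBall (x := 0) (r := 1)).subset fun x hx => ?_
  rw [mem_closedBall_zero_iff, pi_norm_le_iff_of_nonneg zero_le_one]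
  intro i
  rw [Real.norm_eq_abs, ← sq_le_one_iff_abs_le_one, ← hx]
  exact single_le_sum (fun j _ => sq_nonneg (x j)) (mem_univ i)

theorem exists_eq_smul_mem_euclideanUnitSphere {ι : Type*} [Fintype ι] {x : ι → ℝ}
    (hx : x ≠ 0) : ∃ r : ℝ, ∃ u ∈ euclideanUnitSphere ι, x = r • u := by
  have hpos : 0 < ∑ i, x i ^ 2 := by
    obtain ⟨i, hi⟩ := Function.ne_iff.mp hx
    exact sum_pos' (fun j _ => sq_nonneg (x j)) ⟨i, mem_univ i, sq_pos_of_ne_zero hi⟩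
  set r := √(∑ i, x i ^ 2)
  have hr : r ≠ 0 := (Real.sqrt_pos.mpr hpos).ne'
  refine ⟨r, r⁻¹ • x, ?_, by rw [smul_smul, mul_inv_cancel₀ hr, one_smul]⟩
  simp only [euclideanUnitSphere, Set.mem_ofPred_eq, Pi.smul_apply, smul_eq_mul, mul_pow,
    ← mul_sum, inv_pow, r, Real.sq_sqrt hpos.le]
  exact inv_mul_cancel₀ hpos.ne'

section BiquadraticTensor

variable {d1 d2 : ℕ} {T : Fin d1 → Fin d2 → Fin d1 → Fin d2 → ℝ}

theorem bform_add (T S : Fin d1 → Fin d2 → Fin d1 → Fin d2 → ℝ) (x : Fin d1 → ℝ)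
    (y : Fin d2 → ℝ) : bform (T + S) x y = bform T x y + bform S x y := by
  simp only [bform, Pi.add_apply, add_mul, sum_add_distrib]

theorem bform_smul (c : ℝ) (T : Fin d1 → Fin d2 → Fin d1 → Fin d2 → ℝ) (x : Fin d1 → ℝ)
    (y : Fin d2 → ℝ) : bform (c • T) x y = c * bform T x y := by
  simp only [bform, Pi.smul_apply, smul_eq_mul, mul_sum, mul_assoc]

theorem bform_smul_smul (T : Fin d1 → Fin d2 → Fin d1 → Fin d2 → ℝ) (a b : ℝ)
    (x : Fin d1 → ℝ) (y : Fin d2 → ℝ) :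
    bform T (a • x) (b • y) = a ^ 2 * b ^ 2 * bform T x y := by
  simp only [bform, Pi.smul_apply, smul_eq_mul, mul_sum]
  refine sum_congr rfl fun i _ => sum_congr rfl fun j _ =>
    sum_congr rfl fun p _ => sum_congr rfl fun q _ => by ring

theorem bform_eq_sum_sum (T : Fin d1 → Fin d2 → Fin d1 → Fin d2 → ℝ) (x : Fin d1 → ℝ)
    (y : Fin d2 → ℝ) :
    bform T x y = ∑ i, ∑ p, (∑ j, ∑ q, T i j p q * y j * y q) * x i * x p := by
  simp only [bform, sum_mul]
  refine sum_congr rfl fun i _ => sum_comm.trans (sum_congr rfl fun p _ =>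
    sum_congr rfl fun j _ => sum_congr rfl fun q _ => by ring)

theorem Biquadratic.eq_zero_of_bform_eq_zero (hT : Biquadratic T)
    (h : ∀ x y, bform T x y = 0) : T = 0 := by
  have hslice : ∀ y : Fin d2 → ℝ, (fun i p => ∑ j, ∑ q, T i j p q * y j * y q) = 0 := fun y =>
    eq_zero_of_symm_of_forall_sum_mul_mul_eq_zero
      (fun i p => by simp only [(hT i _ p _).1]) fun x => by rw [← bform_eq_sum_sum, h]
  funext i j p q
  have hentry : (fun j q => T i j p q) = 0 :=
    eq_zero_of_symm_of_forall_sum_mul_mul_eq_zero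
      (fun j q => by rw [(hT i j p q).2, (hT p q i j).1]) fun y => congr_fun₂ (hslice y) i p
  exact congr_fun₂ hentry j q

theorem bSpec_eq_sSup_image (T : Fin d1 → Fin d2 → Fin d1 → Fin d2 → ℝ) :
    bSpec T = sSup ((fun z => |bform T z.1 z.2|) ''
      (euclideanUnitSphere (Fin d1) ×ˢ euclideanUnitSphere (Fin d2))) := by
  refine congrArg sSup (Set.ext fun r => ?_)
  simp only [euclideanUnitSphere, Set.mem_image, Set.mem_prod, Set.mem_ofPred_eq, Prod.exists]
  grind

theorem abs_bform_le_bSpec (T : Fin d1 → Fin d2 → Fin d1 → Fin d2 → ℝ) {x : Fin d1 → ℝ}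
    {y : Fin d2 → ℝ} (hx : x ∈ euclideanUnitSphere (Fin d1))
    (hy : y ∈ euclideanUnitSphere (Fin d2)) : |bform T x y| ≤ bSpec T := by
  have hcont : Continuous fun z : (Fin d1 → ℝ) × (Fin d2 → ℝ) => |bform T z.1 z.2| := by
    unfold bform
    fun_prop
  have hbdd := (((isCompact_euclideanUnitSphere (Fin d1)).prod
    (isCompact_euclideanUnitSphere (Fin d2))).image hcont).bddAbove
  have hmem : |bform T x y| ∈ (fun z : (Fin d1 → ℝ) × (Fin d2 → ℝ) => |bform T z.1 z.2|) ''
      (euclideanUnitSphere (Fin d1) ×ˢ euclideanUnitSphere (Fin d2)) :=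
    ⟨(x, y), Set.mk_mem_prod hx hy, rfl⟩
  rw [bSpec_eq_sSup_image]
  exact le_csSup hbdd hmem

theorem bSpec_nonneg (T : Fin d1 → Fin d2 → Fin d1 → Fin d2 → ℝ) : 0 ≤ bSpec T :=
  Real.sSup_nonneg (by rintro _ ⟨x, y, -, -, rfl⟩; positivity)

theorem bSpec_smul (c : ℝ) (T : Fin d1 → Fin d2 → Fin d1 → Fin d2 → ℝ) :
    bSpec (c • T) = |c| * bSpec T := by
  rw [bSpec_eq_sSup_image, bSpec_eq_sSup_image, ← smul_eq_mul,
    ← Real.sSup_smul_of_nonneg (abs_nonneg c), ← Set.image_smul, Set.image_image]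
  simp only [bform_smul, abs_mul, smul_eq_mul]

theorem bSpec_zero : bSpec (0 : Fin d1 → Fin d2 → Fin d1 → Fin d2 → ℝ) = 0 := by
  simpa using bSpec_smul 0 (0 : Fin d1 → Fin d2 → Fin d1 → Fin d2 → ℝ)

theorem bSpec_add_le (T S : Fin d1 → Fin d2 → Fin d1 → Fin d2 → ℝ) :
    bSpec (T + S) ≤ bSpec T + bSpec S := by
  refine Real.sSup_le ?_ (add_nonneg (bSpec_nonneg T) (bSpec_nonneg S))
  rintro _ ⟨x, y, hx, hy, rfl⟩
  rw [bform_add]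
  exact (abs_add_le _ _).trans
    (add_le_add (abs_bform_le_bSpec T hx hy) (abs_bform_le_bSpec S hx hy))

theorem Biquadratic.eq_zero_of_bSpec_eq_zero (hT : Biquadratic T) (h : bSpec T = 0) :
    T = 0 := by
  refine hT.eq_zero_of_bform_eq_zero fun x y => ?_
  rcases eq_or_ne x 0 with rfl | hx
  · simp [bform]
  rcases eq_or_ne y 0 with rfl | hy
  · simp [bform]
  obtain ⟨r, u, hu, rfl⟩ := exists_eq_smul_mem_euclideanUnitSphere hx
  obtain ⟨s, v, hv, rfl⟩ := exists_eq_smul_mem_euclideanUnitSphere hy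
  have huv : |bform T u v| ≤ 0 := h ▸ abs_bform_le_bSpec T hu hv
  rw [bform_smul_smul, abs_nonpos_iff.mp huv, mul_zero]

end BiquadraticTensor

theorem stmt1_general {d1 d2 : ℕ} :
    (∀ T : Fin d1 → Fin d2 → Fin d1 → Fin d2 → ℝ, Biquadratic T →
      0 ≤ bSpec T ∧ (bSpec T = 0 ↔ T = 0)) ∧
    (∀ T : Fin d1 → Fin d2 → Fin d1 → Fin d2 → ℝ, Biquadratic T →
      ∀ c : ℝ, bSpec (c • T) = |c| * bSpec T) ∧
    (∀ T S : Fin d1 → Fin d2 → Fin d1 → Fin d2 → ℝ, Biquadratic T → Biquadratic S →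
      bSpec (T + S) ≤ bSpec T + bSpec S) := by
  refine ⟨fun T hT => ⟨bSpec_nonneg T, hT.eq_zero_of_bSpec_eq_zero, ?_⟩,
    fun T _ c => bSpec_smul c T, fun T S _ _ => bSpec_add_le T S⟩
  rintro rfl
  exact bSpec_zero

theorem stmt1 {d1 d2 : ℕ} (hd1 : 0 < d1) (hd2 : 0 < d2) :
    (∀ T : Fin d1 → Fin d2 → Fin d1 → Fin d2 → ℝ, Biquadratic T →
      0 ≤ bSpec T ∧ (bSpec T = 0 ↔ T = 0)) ∧
    (∀ T : Fin d1 → Fin d2 → Fin d1 → Fin d2 → ℝ, Biquadratic T →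
      ∀ c : ℝ, bSpec (c • T) = |c| * bSpec T) ∧
    (∀ T S : Fin d1 → Fin d2 → Fin d1 → Fin d2 → ℝ, Biquadratic T → Biquadratic S →
      bSpec (T + S) ≤ bSpec T + bSpec S) :=
  stmt1_general
end
end

section
/- Every biquadratic tensor T ∈ ℝ^{d1×d2×d1×d2} (with d1, d2 ≥ 1) has at least one M-eigenvalue. -/
noncomputable section

/-- `mu` is an M-eigenvalue of `T` with M-eigenvectors `x, y`. -/
def IsMEigen {d1 d2 : ℕ} (T : Fin d1 → Fin d2 → Fin d1 → Fin d2 → ℝ)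
    (mu : ℝ) (x : Fin d1 → ℝ) (y : Fin d2 → ℝ) : Prop :=
  (∀ i, ∑ j, ∑ p, ∑ q, T i j p q * y j * x p * y q = mu * x i) ∧
  (∀ j, ∑ i, ∑ p, ∑ q, T i j p q * x i * x p * y q = mu * y j) ∧
  (∑ i, x i ^ 2 = 1) ∧ (∑ j, y j ^ 2 = 1)

/-- If a quadratic in `t` is nonnegative for all `t`, its linear coefficient vanishes. -/
lemma bquad_zero (a b : ℝ) (h : ∀ t : ℝ, 0 ≤ a * t ^ 2 + b * t) : b = 0 := by
  by_contra hb
  have hD : (0:ℝ) < |a| + 1 := by positivity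
  have h1 := h (-b / (|a| + 1))
  have heq : a * (-b / (|a| + 1)) ^ 2 + b * (-b / (|a| + 1))
      = b ^ 2 * (a - (|a| + 1)) / (|a| + 1) ^ 2 := by
    field_simp; ring
  rw [heq, le_div_iff₀ (by positivity)] at h1
  have h2 : a - (|a| + 1) ≤ -1 := by nlinarith [le_abs_self a]
  have hb2 : 0 < b ^ 2 := by positivity
  nlinarith

/-- A unit-norm maximizer of the quadratic form of a symmetric matrix `A` over the
unit sphere is an eigenvector of `A`, with eigenvalue the maximum value. -/
lemma rayleigh_max {n : ℕ} (A : Fin n → Fin n → ℝ) (hA : ∀ i p, A i p = A p i)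
    (x : Fin n → ℝ) (hx : ∑ i, x i ^ 2 = 1)
    (hmax : ∀ z : Fin n → ℝ, ∑ i, z i ^ 2 = 1 →
      ∑ i, ∑ p, A i p * z i * z p ≤ ∑ i, ∑ p, A i p * x i * x p) :
    ∀ i, ∑ p, A i p * x p = (∑ i, ∑ p, A i p * x i * x p) * x i := by
  set L := ∑ i, ∑ p, A i p * x i * x p with hL
  have step1 : ∀ v : Fin n → ℝ, ∑ i, ∑ p, A i p * v i * v p ≤ L * ∑ i, v i ^ 2 := by
    intro v
    by_cases hv : ∑ i, v i ^ 2 = 0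
    · have hvz : ∀ i, v i = 0 := by
        intro i
        have h1 : v i ^ 2 ≤ ∑ i, v i ^ 2 :=
          Finset.single_le_sum (fun i _ => sq_nonneg (v i)) (Finset.mem_univ i)
        rw [hv] at h1
        nlinarith [sq_nonneg (v i)]
      have l0 : ∑ i, ∑ p, A i p * v i * v p = 0 := by simp [hvz]
      rw [l0, hv, mul_zero]
    · have hvpos : 0 < ∑ i, v i ^ 2 :=
        lt_of_le_of_ne (Finset.sum_nonneg fun i _ => sq_nonneg _) (Ne.symm hv)
      set c := Real.sqrt (∑ i, v i ^ 2) with hc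
      have hcpos : 0 < c := Real.sqrt_pos.mpr hvpos
      have hc2 : c ^ 2 = ∑ i, v i ^ 2 := Real.sq_sqrt hvpos.le
      have hc0 : c ≠ 0 := ne_of_gt hcpos
      have hz : ∑ i, (v i / c) ^ 2 = 1 := by
        simp_rw [div_pow]
        rw [← Finset.sum_div, ← hc2, div_self (by positivity)]
      have hle := hmax (fun i => v i / c) hz
      have hQ : ∑ i, ∑ p, A i p * (v i / c) * (v p / c)
          = (∑ i, ∑ p, A i p * v i * v p) / c ^ 2 := by
        rw [Finset.sum_div]
        refine Finset.sum_congr rfl fun i _ => ?_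
        rw [Finset.sum_div]
        refine Finset.sum_congr rfl fun p _ => ?_
        have e2 : (A i p * v i * v p) / c ^ 2 = (A i p * v i * v p) * (c⁻¹ * c⁻¹) := by
          rw [div_eq_mul_inv, sq, mul_inv]
        rw [e2]; ring
      rw [hQ] at hle
      calc ∑ i, ∑ p, A i p * v i * v p
          = ((∑ i, ∑ p, A i p * v i * v p) / c ^ 2) * c ^ 2 := by field_simp
        _ ≤ L * c ^ 2 := mul_le_mul_of_nonneg_right hle (sq_nonneg c)
        _ = L * ∑ i, v i ^ 2 := by rw [hc2]
  have split : ∀ u v : Fin n → ℝ, ∑ i, ∑ p, A i p * (u i + v i) * (u p + v p)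
      = (∑ i, ∑ p, A i p * u i * u p) + (∑ i, ∑ p, A i p * u i * v p)
        + (∑ i, ∑ p, A i p * v i * u p) + (∑ i, ∑ p, A i p * v i * v p) := by
    intro u v
    rw [← Finset.sum_add_distrib, ← Finset.sum_add_distrib, ← Finset.sum_add_distrib]
    refine Finset.sum_congr rfl fun i _ => ?_
    rw [← Finset.sum_add_distrib, ← Finset.sum_add_distrib, ← Finset.sum_add_distrib]
    exact Finset.sum_congr rfl fun p _ => by ring
  have hsc : ∀ (t : ℝ) (u v : Fin n → ℝ),
      (∑ i, ∑ p, A i p * (t * u i) * v p) = t * ∑ i, ∑ p, A i p * u i * v p := by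
    intro t u v
    rw [Finset.mul_sum]
    refine Finset.sum_congr rfl fun i _ => ?_
    rw [Finset.mul_sum]
    exact Finset.sum_congr rfl fun p _ => by ring
  have hsc2 : ∀ (t : ℝ) (u v : Fin n → ℝ),
      (∑ i, ∑ p, A i p * u i * (t * v p)) = t * ∑ i, ∑ p, A i p * u i * v p := by
    intro t u v
    rw [Finset.mul_sum]
    refine Finset.sum_congr rfl fun i _ => ?_
    rw [Finset.mul_sum]
    exact Finset.sum_congr rfl fun p _ => by ring
  have hsym : ∀ u v : Fin n → ℝ,
      (∑ i, ∑ p, A i p * u i * v p) = ∑ i, ∑ p, A i p * v i * u p := by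
    intro u v
    rw [Finset.sum_comm]
    refine Finset.sum_congr rfl fun i _ => ?_
    refine Finset.sum_congr rfl fun p _ => ?_
    rw [hA p i]; ring
  have key : ∀ w : Fin n → ℝ, ∑ i, ∑ p, A i p * x i * w p = L * ∑ i, x i * w i := by
    intro w
    set C := ∑ i, ∑ p, A i p * x i * w p with hCdef
    set Qw := ∑ i, ∑ p, A i p * w i * w p with hQw
    have hb := bquad_zero (L * ∑ i, w i ^ 2 - Qw) (2 * (L * (∑ i, x i * w i) - C)) ?_
    · linarith
    intro t
    have h1 := step1 (fun i => x i + t * w i)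
    have en : ∑ i, (x i + t * w i) ^ 2
        = 1 + (2 * t) * (∑ i, x i * w i) + t ^ 2 * ∑ i, w i ^ 2 := by
      have e : ∀ i ∈ Finset.univ, (x i + t * w i) ^ 2
          = x i ^ 2 + (2 * t) * (x i * w i) + t ^ 2 * w i ^ 2 := fun i _ => by ring
      rw [Finset.sum_congr rfl e, Finset.sum_add_distrib, Finset.sum_add_distrib,
        ← Finset.mul_sum, ← Finset.mul_sum, hx]
    have eq : ∑ i, ∑ p, A i p * (x i + t * w i) * (x p + t * w p)
        = L + (2 * t) * C + t ^ 2 * Qw := by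
      have := split x (fun i => t * w i)
      rw [this, hsc2 t x w, hsc t w x, hsym w x]
      have h3 : ∑ i, ∑ p, A i p * (t * w i) * (t * w p) = t ^ 2 * Qw := by
        rw [hsc t w (fun p => t * w p), hsc2 t w w, hQw]; ring
      rw [h3, ← hL, ← hCdef]
      ring
    rw [eq, en] at h1
    nlinarith [h1]
  intro i
  have hk := key (Pi.single (M := fun _ : Fin n => ℝ) i 1)
  have l1 : ∑ i', ∑ p, A i' p * x i' * Pi.single (M := fun _ : Fin n => ℝ) i 1 p
      = ∑ p, A i p * x p := by
    have e : ∀ i' ∈ Finset.univ,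
        ∑ p, A i' p * x i' * Pi.single (M := fun _ : Fin n => ℝ) i 1 p = A i' i * x i' := by
      intro i' _
      rw [Finset.sum_eq_single i]
      · simp
      · intro b _ hb; simp [Pi.single_apply, hb]
      · simp
    rw [Finset.sum_congr rfl e]
    exact Finset.sum_congr rfl fun p _ => by rw [hA p i]
  have l2 : ∑ i', x i' * Pi.single (M := fun _ : Fin n => ℝ) i 1 i' = x i := by
    rw [Finset.sum_eq_single i]
    · simp
    · intro b _ hb; simp [Pi.single_apply, hb]
    · simp
  rw [l1, l2] at hk
  exact hk

lemma reorderA {d1 d2 : ℕ} (T : Fin d1 → Fin d2 → Fin d1 → Fin d2 → ℝ)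
    (x x' : Fin d1 → ℝ) (y y' : Fin d2 → ℝ) :
    ∑ i, ∑ j, ∑ p, ∑ q, T i j p q * x i * y j * x' p * y' q
    = ∑ i, ∑ p, (∑ j, ∑ q, T i j p q * y j * y' q) * x i * x' p := by
  refine Finset.sum_congr rfl fun i _ => ?_
  rw [Finset.sum_comm]
  refine Finset.sum_congr rfl fun p _ => ?_
  rw [Finset.sum_mul, Finset.sum_mul]
  refine Finset.sum_congr rfl fun j _ => ?_
  rw [Finset.sum_mul, Finset.sum_mul]
  exact Finset.sum_congr rfl fun q _ => by ring

lemma reorderB {d1 d2 : ℕ} (T : Fin d1 → Fin d2 → Fin d1 → Fin d2 → ℝ)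
    (x x' : Fin d1 → ℝ) (y y' : Fin d2 → ℝ) :
    ∑ i, ∑ j, ∑ p, ∑ q, T i j p q * x i * y j * x' p * y' q
    = ∑ j, ∑ q, (∑ i, ∑ p, T i j p q * x i * x' p) * y j * y' q := by
  rw [Finset.sum_comm]
  refine Finset.sum_congr rfl fun j _ => ?_
  simp_rw [Finset.sum_mul]
  have h1 : ∀ i : Fin d1, ∑ p, ∑ q, T i j p q * x i * y j * x' p * y' q
      = ∑ q, ∑ p, T i j p q * x i * y j * x' p * y' q := fun i => Finset.sum_comm
  rw [Finset.sum_congr rfl fun i _ => h1 i, Finset.sum_comm]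
  refine Finset.sum_congr rfl fun q _ => Finset.sum_congr rfl fun i _ =>
    Finset.sum_congr rfl fun p _ => by ring

lemma reorderEx {d1 d2 : ℕ} (T : Fin d1 → Fin d2 → Fin d1 → Fin d2 → ℝ)
    (x : Fin d1 → ℝ) (y : Fin d2 → ℝ) (i : Fin d1) :
    ∑ p, (∑ j, ∑ q, T i j p q * y j * y q) * x p
    = ∑ j, ∑ p, ∑ q, T i j p q * y j * x p * y q := by
  simp_rw [Finset.sum_mul]
  rw [Finset.sum_comm]
  refine Finset.sum_congr rfl fun j _ => Finset.sum_congr rfl fun p _ =>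
    Finset.sum_congr rfl fun q _ => by ring

lemma reorderEy {d1 d2 : ℕ} (T : Fin d1 → Fin d2 → Fin d1 → Fin d2 → ℝ)
    (x : Fin d1 → ℝ) (y : Fin d2 → ℝ) (j : Fin d2) :
    ∑ q, (∑ i, ∑ p, T i j p q * x i * x p) * y q
    = ∑ i, ∑ p, ∑ q, T i j p q * x i * x p * y q := by
  simp_rw [Finset.sum_mul]
  rw [Finset.sum_comm]
  refine Finset.sum_congr rfl fun i _ => ?_
  rw [Finset.sum_comm]

theorem stmt2 {d1 d2 : ℕ} (hd1 : 0 < d1) (hd2 : 0 < d2)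
    (T : Fin d1 → Fin d2 → Fin d1 → Fin d2 → ℝ) (hT : Biquadratic T) :
    ∃ mu : ℝ, ∃ x : Fin d1 → ℝ, ∃ y : Fin d2 → ℝ, IsMEigen T mu x y := by
  set K : Set ((Fin d1 → ℝ) × (Fin d2 → ℝ)) :=
    {p | (∑ i, p.1 i ^ 2 = 1) ∧ (∑ j, p.2 j ^ 2 = 1)} with hK
  have hcont : Continuous (fun p : (Fin d1 → ℝ) × (Fin d2 → ℝ) => bform T p.1 p.2) := by
    unfold bform
    refine continuous_finset_sum _ fun i _ => continuous_finset_sum _ fun j _ =>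
      continuous_finset_sum _ fun p _ => continuous_finset_sum _ fun q _ => ?_
    fun_prop
  have hclosed : IsClosed K := by
    refine IsClosed.inter ?_ ?_
    · exact isClosed_eq (by fun_prop) continuous_const
    · exact isClosed_eq (by fun_prop) continuous_const
  have hbd : K ⊆ Metric.closedBall 0 1 := by
    rintro ⟨x, y⟩ ⟨hx, hy⟩
    rw [Metric.mem_closedBall, dist_zero_right]
    have key : ∀ {n : ℕ} (v : Fin n → ℝ), (∑ i, v i ^ 2 = 1) → ‖v‖ ≤ 1 := by
      intro n v hv
      rw [pi_norm_le_iff_of_nonneg zero_le_one]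
      intro i
      have h1 : v i ^ 2 ≤ 1 := by
        rw [← hv]
        exact Finset.single_le_sum (fun i _ => sq_nonneg (v i)) (Finset.mem_univ i)
      rw [Real.norm_eq_abs]
      nlinarith [abs_nonneg (v i), sq_abs (v i)]
    exact max_le (key x hx) (key y hy)
  have hcpt : IsCompact K :=
    (isCompact_closedBall 0 1).of_isClosed_subset hclosed hbd
  have hne : K.Nonempty := by
    refine ⟨⟨Pi.single (M := fun _ : Fin d1 => ℝ) ⟨0, hd1⟩ 1,
            Pi.single (M := fun _ : Fin d2 => ℝ) ⟨0, hd2⟩ 1⟩, ?_, ?_⟩ <;>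
    · simp [Pi.single_apply]
  obtain ⟨⟨x, y⟩, hmem, hmax⟩ := hcpt.exists_isMaxOn hne hcont.continuousOn
  obtain ⟨hx, hy⟩ := hmem
  have hmax' : ∀ z w, (∑ i, z i ^ 2 = 1) → (∑ j, w j ^ 2 = 1) →
      bform T z w ≤ bform T x y := by
    intro z w hz hw
    exact isMaxOn_iff.mp hmax ⟨z, w⟩ ⟨hz, hw⟩
  set mu := bform T x y with hmu
  refine ⟨mu, x, y, ?_, ?_, hx, hy⟩
  · -- x-eigenvector equation
    set A : Fin d1 → Fin d1 → ℝ := fun i p => ∑ j, ∑ q, T i j p q * y j * y q with hAdef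
    have hAsym : ∀ i p, A i p = A p i := by
      intro i p
      exact Finset.sum_congr rfl fun j _ => Finset.sum_congr rfl fun q _ => by
        rw [(hT i j p q).1]
    have hmaxA : ∀ z : Fin d1 → ℝ, ∑ i, z i ^ 2 = 1 →
        ∑ i, ∑ p, A i p * z i * z p ≤ ∑ i, ∑ p, A i p * x i * x p := by
      intro z hz
      rw [← reorderA T z z y y, ← reorderA T x x y y]
      exact hmax' z y hz hy
    have hr := rayleigh_max A hAsym x hx hmaxA
    have hLA : (∑ i, ∑ p, A i p * x i * x p) = mu := by
      rw [← reorderA T x x y y, hmu]; rfl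
    intro i
    have := hr i
    rw [hLA] at this
    rw [← reorderEx T x y i]
    exact this
  · -- y-eigenvector equation
    set B : Fin d2 → Fin d2 → ℝ := fun j q => ∑ i, ∑ p, T i j p q * x i * x p with hBdef
    have hBsym : ∀ j q, B j q = B q j := by
      intro j q
      refine Finset.sum_congr rfl fun i _ => Finset.sum_congr rfl fun p _ => ?_
      have h1 : T i q p j = T p j i q := (hT i q p j).2
      have h2 : T p j i q = T i j p q := ((hT i j p q).1).symm
      rw [h1, h2]
    have hmaxB : ∀ w : Fin d2 → ℝ, ∑ j, w j ^ 2 = 1 →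
        ∑ j, ∑ q, B j q * w j * w q ≤ ∑ j, ∑ q, B j q * y j * y q := by
      intro w hw
      rw [← reorderB T x x w w, ← reorderB T x x y y]
      exact hmax' x w hx hw
    have hr := rayleigh_max B hBsym y hy hmaxB
    have hLB : (∑ j, ∑ q, B j q * y j * y q) = mu := by
      rw [← reorderB T x x y y, hmu]; rfl
    intro j
    have := hr j
    rw [hLB] at this
    rw [← reorderEy T x y j]
    exact this
end
end

section
/- The spectral norm of a biquadratic tensor T equals the largest absolute value of its M-eigenvalues. -/
noncomputable section

/-! ### Auxiliary lemmas -/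

lemma quad_aux (a b : ℝ) (hb : 0 ≤ b) (h : ∀ t : ℝ, 0 ≤ 2 * t * a + t ^ 2 * b) : a = 0 := by
  by_contra ha
  have h1 : (0:ℝ) < b + 1 := by linarith
  have ht : (-a / (b + 1)) * (b + 1) = -a := div_mul_cancel₀ _ (ne_of_gt h1)
  have h2 := h (-a / (b + 1))
  have h4 : 0 ≤ (2 * (-a / (b + 1)) * a + (-a / (b + 1)) ^ 2 * b) * (b + 1)^2 := by positivity
  have h5 : (2 * (-a / (b + 1)) * a + (-a / (b + 1)) ^ 2 * b) * (b + 1)^2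
      = 2 * ((-a / (b + 1)) * (b+1)) * a * (b+1) + ((-a / (b + 1)) * (b+1))^2 * b := by ring
  rw [h5, ht] at h4
  have ha2 : 0 < a ^ 2 := by positivity
  nlinarith [h4]

/-- A maximizer of a symmetric quadratic form on the unit sphere is an eigenvector. -/
lemma key {n : ℕ} (A : Fin n → Fin n → ℝ) (hA : ∀ i p, A p i = A i p)
    (x : Fin n → ℝ) (hx : ∑ i, x i ^ 2 = 1)
    (hmax : ∀ z : Fin n → ℝ, (∑ i, z i ^ 2 = 1) →
      (∑ i, ∑ p, A i p * z i * z p) ≤ ∑ i, ∑ p, A i p * x i * x p) :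
    ∀ i, (∑ p, A i p * x p) = (∑ i, ∑ p, A i p * x i * x p) * x i := by
  set lam := ∑ i, ∑ p, A i p * x i * x p with hlam
  have hQ : ∀ z : Fin n → ℝ, (∑ i, ∑ p, A i p * z i * z p) ≤ lam * ∑ i, z i ^ 2 := by
    intro z
    by_cases hs : ∑ i, z i ^ 2 = 0
    · have hz : ∀ i, z i = 0 := by
        intro i
        have h0 := (Finset.sum_eq_zero_iff_of_nonneg (fun i _ => sq_nonneg (z i))).mp hs i
          (Finset.mem_univ i)
        exact pow_eq_zero_iff (two_ne_zero) |>.mp h0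
      simp [hz, hs]
    · have hs' : 0 < ∑ i, z i ^ 2 :=
        lt_of_le_of_ne (Finset.sum_nonneg fun i _ => sq_nonneg (z i)) (Ne.symm hs)
      set s := ∑ i, z i ^ 2 with hsdef
      set c := (Real.sqrt s)⁻¹ with hcdef
      have hc2 : c ^ 2 = s⁻¹ := by
        rw [hcdef, ← Real.sqrt_inv, Real.sq_sqrt (by positivity)]
      have h1 : ∑ i, (c * z i) ^ 2 = 1 := by
        have : ∑ i, (c * z i) ^ 2 = c ^ 2 * s := by
          rw [hsdef, Finset.mul_sum]
          exact Finset.sum_congr rfl fun i _ => by ring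
        rw [this, hc2, inv_mul_cancel₀ hs]
      have h2 := hmax (fun i => c * z i) h1
      have h3 : ∑ i, ∑ p, A i p * (c * z i) * (c * z p)
          = c ^ 2 * ∑ i, ∑ p, A i p * z i * z p := by
        rw [Finset.mul_sum]
        refine Finset.sum_congr rfl fun i _ => ?_
        rw [Finset.mul_sum]
        exact Finset.sum_congr rfl fun p _ => by ring
      rw [h3, hc2] at h2
      have := mul_le_mul_of_nonneg_left h2 (le_of_lt hs')
      rw [mul_inv_cancel_left₀ hs] at this
      linarith [this]
  have hcross : ∀ z : Fin n → ℝ,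
      lam * (∑ i, x i * z i) - (∑ i, ∑ p, A i p * z i * x p) = 0 := by
    intro z
    set X := ∑ i, x i * z i with hX
    set Z := ∑ i, z i ^ 2 with hZ
    set Lzx := ∑ i, ∑ p, A i p * z i * x p with hLzx
    set Lxz := ∑ i, ∑ p, A i p * x i * z p with hLxz
    set Qz := ∑ i, ∑ p, A i p * z i * z p with hQz
    have hL : Lxz = Lzx := by
      rw [hLxz, Finset.sum_comm]
      refine Finset.sum_congr rfl fun j _ => Finset.sum_congr rfl fun k _ => ?_
      rw [hA j k]; ring
    refine quad_aux _ (lam * Z - Qz) (by linarith [hQ z]) fun t => ?_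
    set w : Fin n → ℝ := fun i => x i + t * z i with hw
    have hw2 : ∑ i, w i ^ 2 = 1 + 2 * t * X + t ^ 2 * Z := by
      have e : ∀ i, w i ^ 2 = x i ^ 2 + (2 * t) * (x i * z i) + t ^ 2 * z i ^ 2 :=
        fun i => by simp only [hw]; ring
      rw [Finset.sum_congr rfl fun i _ => e i, Finset.sum_add_distrib, Finset.sum_add_distrib,
        ← Finset.mul_sum, ← Finset.mul_sum, hx, ← hX, ← hZ]
    have hQw : ∑ i, ∑ p, A i p * w i * w p = lam + t * Lxz + t * Lzx + t ^ 2 * Qz := by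
      have e : ∀ i p, A i p * w i * w p = A i p * x i * x p + t * (A i p * x i * z p)
          + t * (A i p * z i * x p) + t ^ 2 * (A i p * z i * z p) :=
        fun i p => by simp only [hw]; ring
      calc ∑ i, ∑ p, A i p * w i * w p
          = ∑ i, ∑ p, (A i p * x i * x p + t * (A i p * x i * z p)
              + t * (A i p * z i * x p) + t ^ 2 * (A i p * z i * z p)) :=
            Finset.sum_congr rfl fun i _ => Finset.sum_congr rfl fun p _ => e i p
        _ = lam + t * Lxz + t * Lzx + t ^ 2 * Qz := by
            simp only [Finset.sum_add_distrib, ← Finset.mul_sum, hlam, hLxz, hLzx, hQz]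
    have h1 := hQ w
    rw [hw2, hQw] at h1
    have e2 : lam * (1 + 2 * t * X + t ^ 2 * Z) - (lam + t * Lxz + t * Lzx + t ^ 2 * Qz)
        = 2 * t * (lam * X - Lzx) + t ^ 2 * (lam * Z - Qz) := by rw [hL]; ring
    linarith [h1, e2.ge, e2.le]
  intro i0
  have h := hcross (fun j => if j = i0 then (1:ℝ) else 0)
  have e1 : ∑ i, x i * (if i = i0 then (1:ℝ) else 0) = x i0 := by
    simp
  have e2 : ∑ i, ∑ p, A i p * (if i = i0 then (1:ℝ) else 0) * x p = ∑ p, A i0 p * x p := by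
    rw [Finset.sum_eq_single i0]
    · simp
    · intro b _ hb; simp [hb]
    · intro h; exact absurd (Finset.mem_univ i0) h
  rw [e1, e2] at h
  linarith

def AmatAux {d1 d2 : ℕ} (T : Fin d1 → Fin d2 → Fin d1 → Fin d2 → ℝ)
    (y : Fin d2 → ℝ) : Fin d1 → Fin d1 → ℝ :=
  fun i p => ∑ j, ∑ q, T i j p q * y j * y q

def BmatAux {d1 d2 : ℕ} (T : Fin d1 → Fin d2 → Fin d1 → Fin d2 → ℝ)
    (x : Fin d1 → ℝ) : Fin d2 → Fin d2 → ℝ :=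
  fun j q => ∑ i, ∑ p, T i j p q * x i * x p

variable {d1 d2 : ℕ} {T : Fin d1 → Fin d2 → Fin d1 → Fin d2 → ℝ}

lemma Amat_symm (hT : Biquadratic T) (y : Fin d2 → ℝ) :
    ∀ i p, AmatAux T y p i = AmatAux T y i p := by
  intro i p
  refine Finset.sum_congr rfl fun j _ => Finset.sum_congr rfl fun q _ => ?_
  rw [← (hT i j p q).1]

lemma Bmat_symm (hT : Biquadratic T) (x : Fin d1 → ℝ) :
    ∀ j q, BmatAux T x q j = BmatAux T x j q := by
  intro j q
  refine Finset.sum_congr rfl fun i _ => Finset.sum_congr rfl fun p _ => ?_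
  rw [(hT i q p j).1, ← (hT i j p q).2]

lemma hAform (x : Fin d1 → ℝ) (y : Fin d2 → ℝ) :
    ∑ i, ∑ p, AmatAux T y i p * x i * x p = bform T x y := by
  simp only [AmatAux, bform, Finset.sum_mul]
  refine Finset.sum_congr rfl fun i _ => ?_
  rw [Finset.sum_comm]
  exact Finset.sum_congr rfl fun j _ => Finset.sum_congr rfl fun p _ =>
    Finset.sum_congr rfl fun q _ => by ring

lemma hBform (x : Fin d1 → ℝ) (y : Fin d2 → ℝ) :
    ∑ j, ∑ q, BmatAux T x j q * y j * y q = bform T x y := by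
  simp only [BmatAux, bform, Finset.sum_mul]
  calc ∑ j, ∑ q, ∑ i, ∑ p, T i j p q * x i * x p * y j * y q
      = ∑ j, ∑ i, ∑ q, ∑ p, T i j p q * x i * x p * y j * y q :=
        Finset.sum_congr rfl fun j _ => Finset.sum_comm
    _ = ∑ i, ∑ j, ∑ q, ∑ p, T i j p q * x i * x p * y j * y q := Finset.sum_comm
    _ = ∑ i, ∑ j, ∑ p, ∑ q, T i j p q * x i * y j * x p * y q :=
        Finset.sum_congr rfl fun i _ => Finset.sum_congr rfl fun j _ =>
          (Finset.sum_comm).trans (Finset.sum_congr rfl fun p _ =>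
            Finset.sum_congr rfl fun q _ => by ring)

lemma hAvec (x : Fin d1 → ℝ) (y : Fin d2 → ℝ) (i : Fin d1) :
    ∑ p, AmatAux T y i p * x p = ∑ j, ∑ p, ∑ q, T i j p q * y j * x p * y q := by
  simp only [AmatAux, Finset.sum_mul]
  rw [Finset.sum_comm]
  exact Finset.sum_congr rfl fun j _ => Finset.sum_congr rfl fun p _ =>
    Finset.sum_congr rfl fun q _ => by ring

lemma hBvec (x : Fin d1 → ℝ) (y : Fin d2 → ℝ) (j : Fin d2) :
    ∑ q, BmatAux T x j q * y q = ∑ i, ∑ p, ∑ q, T i j p q * x i * x p * y q := by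
  simp only [BmatAux, Finset.sum_mul]
  calc ∑ q, ∑ i, ∑ p, T i j p q * x i * x p * y q
      = ∑ i, ∑ q, ∑ p, T i j p q * x i * x p * y q := Finset.sum_comm
    _ = ∑ i, ∑ p, ∑ q, T i j p q * x i * x p * y q :=
        Finset.sum_congr rfl fun i _ => Finset.sum_comm

lemma bform_factor (x : Fin d1 → ℝ) (y : Fin d2 → ℝ) :
    bform T x y = ∑ i, x i * (∑ j, ∑ p, ∑ q, T i j p q * y j * x p * y q) := by
  simp only [bform, Finset.mul_sum]
  exact Finset.sum_congr rfl fun i _ => Finset.sum_congr rfl fun j _ =>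
    Finset.sum_congr rfl fun p _ => Finset.sum_congr rfl fun q _ => by ring

lemma eig_of_max (hT : Biquadratic T) (x0 : Fin d1 → ℝ) (y0 : Fin d2 → ℝ)
    (hx0 : ∑ i, x0 i ^ 2 = 1) (hy0 : ∑ j, y0 j ^ 2 = 1)
    (hub : ∀ (x : Fin d1 → ℝ) (y : Fin d2 → ℝ), (∑ i, x i ^ 2 = 1) → (∑ j, y j ^ 2 = 1) →
      |bform T x y| ≤ |bform T x0 y0|) :
    IsMEigen T (bform T x0 y0) x0 y0 := by
  set s := bform T x0 y0 with hs
  obtain ⟨c, hc1, hcs⟩ : ∃ c : ℝ, (c = 1 ∨ c = -1) ∧ c * s = |s| := by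
    rcases le_or_gt 0 s with h | h
    · exact ⟨1, Or.inl rfl, by rw [abs_of_nonneg h]; ring⟩
    · exact ⟨-1, Or.inr rfl, by rw [abs_of_neg h]; ring⟩
  have hc0 : c ≠ 0 := by rcases hc1 with rfl | rfl <;> norm_num
  have hcle : ∀ r : ℝ, c * r ≤ |r| := by
    intro r
    rcases hc1 with rfl | rfl
    · simpa using le_abs_self r
    · simpa using neg_le_abs r
  have eq1 : ∀ i, ∑ j, ∑ p, ∑ q, T i j p q * y0 j * x0 p * y0 q = s * x0 i := by
    set A' : Fin d1 → Fin d1 → ℝ := fun i p => c * AmatAux T y0 i p with hA'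
    have hsym : ∀ i p, A' p i = A' i p := fun i p => by
      simp only [hA', Amat_symm hT y0 i p]
    have hQ : ∀ z : Fin d1 → ℝ, ∑ i, ∑ p, A' i p * z i * z p = c * bform T z y0 := by
      intro z
      rw [← hAform z y0, Finset.mul_sum]
      exact Finset.sum_congr rfl fun i _ => by
        rw [Finset.mul_sum]
        exact Finset.sum_congr rfl fun p _ => by simp only [hA']; ring
    have hmax : ∀ z : Fin d1 → ℝ, (∑ i, z i ^ 2 = 1) →
        (∑ i, ∑ p, A' i p * z i * z p) ≤ ∑ i, ∑ p, A' i p * x0 i * x0 p := by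
      intro z hz
      rw [hQ z, hQ x0, ← hs, hcs]
      exact le_trans (hcle _) (hub z y0 hz hy0)
    have hk := key A' hsym x0 hx0 hmax
    intro i
    have h1 := hk i
    rw [hQ x0, ← hs, hcs] at h1
    have h2 : ∑ p, A' i p * x0 p = c * ∑ p, AmatAux T y0 i p * x0 p := by
      rw [Finset.mul_sum]
      exact Finset.sum_congr rfl fun p _ => by simp only [hA']; ring
    rw [h2, hAvec x0 y0 i] at h1
    have h3 : c * (c * (∑ j, ∑ p, ∑ q, T i j p q * y0 j * x0 p * y0 q)) = c * (|s| * x0 i) := by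
      rw [h1]
    rw [← mul_assoc, ← mul_assoc, ← hcs] at h3
    have hcc : c * c = 1 := by rcases hc1 with rfl | rfl <;> norm_num
    rw [hcc, one_mul, ← mul_assoc, hcc, one_mul] at h3
    exact h3
  have eq2 : ∀ j, ∑ i, ∑ p, ∑ q, T i j p q * x0 i * x0 p * y0 q = s * y0 j := by
    set B' : Fin d2 → Fin d2 → ℝ := fun j q => c * BmatAux T x0 j q with hB'
    have hsym : ∀ j q, B' q j = B' j q := fun j q => by
      simp only [hB', Bmat_symm hT x0 j q]
    have hQ : ∀ w : Fin d2 → ℝ, ∑ j, ∑ q, B' j q * w j * w q = c * bform T x0 w := by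
      intro w
      rw [← hBform x0 w, Finset.mul_sum]
      exact Finset.sum_congr rfl fun j _ => by
        rw [Finset.mul_sum]
        exact Finset.sum_congr rfl fun q _ => by simp only [hB']; ring
    have hmax : ∀ w : Fin d2 → ℝ, (∑ j, w j ^ 2 = 1) →
        (∑ j, ∑ q, B' j q * w j * w q) ≤ ∑ j, ∑ q, B' j q * y0 j * y0 q := by
      intro w hw
      rw [hQ w, hQ y0, ← hs, hcs]
      exact le_trans (hcle _) (hub x0 w hx0 hw)
    have hk := key B' hsym y0 hy0 hmax
    intro j
    have h1 := hk j
    rw [hQ y0, ← hs, hcs] at h1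
    have h2 : ∑ q, B' j q * y0 q = c * ∑ q, BmatAux T x0 j q * y0 q := by
      rw [Finset.mul_sum]
      exact Finset.sum_congr rfl fun q _ => by simp only [hB']; ring
    rw [h2, hBvec x0 y0 j] at h1
    have h3 : c * (c * (∑ i, ∑ p, ∑ q, T i j p q * x0 i * x0 p * y0 q)) = c * (|s| * y0 j) := by
      rw [h1]
    rw [← mul_assoc, ← mul_assoc, ← hcs] at h3
    have hcc : c * c = 1 := by rcases hc1 with rfl | rfl <;> norm_num
    rw [hcc, one_mul, ← mul_assoc, hcc, one_mul] at h3
    exact h3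
  exact ⟨eq1, eq2, hx0, hy0⟩

lemma bform_of_eig {mu : ℝ} {x : Fin d1 → ℝ} {y : Fin d2 → ℝ}
    (h : IsMEigen T mu x y) : bform T x y = mu := by
  obtain ⟨h1, _, hx, _⟩ := h
  rw [bform_factor]
  calc ∑ i, x i * (∑ j, ∑ p, ∑ q, T i j p q * y j * x p * y q)
      = ∑ i, x i * (mu * x i) := Finset.sum_congr rfl fun i _ => by rw [h1 i]
    _ = mu * ∑ i, x i ^ 2 := by
        rw [Finset.mul_sum]; exact Finset.sum_congr rfl fun i _ => by ring
    _ = mu := by rw [hx, mul_one]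

lemma sphere_iff {n : ℕ} (v : EuclideanSpace ℝ (Fin n)) :
    v ∈ Metric.sphere (0 : EuclideanSpace ℝ (Fin n)) 1 ↔ ∑ i, v i ^ 2 = 1 := by
  rw [mem_sphere_zero_iff_norm, EuclideanSpace.norm_eq]
  rw [show (∑ i, ‖v i‖ ^ 2) = ∑ i, v i ^ 2 from
    Finset.sum_congr rfl fun i _ => by rw [Real.norm_eq_abs, sq_abs]]
  constructor
  · intro h
    have h2 : Real.sqrt (∑ i, v i ^ 2) ^ 2 = 1 := by rw [h]; norm_num
    rwa [Real.sq_sqrt (Finset.sum_nonneg fun i _ => sq_nonneg _)] at h2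
  · intro h; rw [h]; exact Real.sqrt_one

lemma bform_cont :
    Continuous (fun p : EuclideanSpace ℝ (Fin d1) × EuclideanSpace ℝ (Fin d2) =>
      bform T p.1 p.2) := by
  simp only [bform]
  refine continuous_finset_sum _ fun i _ => continuous_finset_sum _ fun j _ =>
    continuous_finset_sum _ fun p _ => continuous_finset_sum _ fun q _ => ?_
  have hx : ∀ i : Fin d1, Continuous
      (fun pr : EuclideanSpace ℝ (Fin d1) × EuclideanSpace ℝ (Fin d2) => pr.1 i) :=
    fun i => (EuclideanSpace.proj i).continuous.comp continuous_fst
  have hy : ∀ j : Fin d2, Continuous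
      (fun pr : EuclideanSpace ℝ (Fin d1) × EuclideanSpace ℝ (Fin d2) => pr.2 j) :=
    fun j => (EuclideanSpace.proj j).continuous.comp continuous_snd
  exact ((((continuous_const.mul (hx i)).mul (hy j)).mul (hx p)).mul (hy q))

lemma exists_max (hd1 : 0 < d1) (hd2 : 0 < d2) :
    ∃ (x0 : Fin d1 → ℝ) (y0 : Fin d2 → ℝ), (∑ i, x0 i ^ 2 = 1) ∧ (∑ j, y0 j ^ 2 = 1) ∧
      ∀ (x : Fin d1 → ℝ) (y : Fin d2 → ℝ), (∑ i, x i ^ 2 = 1) → (∑ j, y j ^ 2 = 1) →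
        |bform T x y| ≤ |bform T x0 y0| := by
  set K : Set (EuclideanSpace ℝ (Fin d1) × EuclideanSpace ℝ (Fin d2)) :=
    (Metric.sphere 0 1) ×ˢ (Metric.sphere 0 1) with hK
  have hKc : IsCompact K := (isCompact_sphere _ _).prod (isCompact_sphere _ _)
  have hKne : K.Nonempty := by
    refine ⟨(EuclideanSpace.single ⟨0, hd1⟩ 1, EuclideanSpace.single ⟨0, hd2⟩ 1), ?_, ?_⟩
    · rw [mem_sphere_zero_iff_norm, EuclideanSpace.norm_single]; norm_num
    · rw [mem_sphere_zero_iff_norm, EuclideanSpace.norm_single]; norm_num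
  obtain ⟨p0, hp0K, hp0⟩ := hKc.exists_isMaxOn hKne
    ((continuous_abs.comp (bform_cont (T := T))).continuousOn)
  refine ⟨p0.1, p0.2, (sphere_iff p0.1).mp hp0K.1, (sphere_iff p0.2).mp hp0K.2, ?_⟩
  intro x y hx hy
  exact isMaxOn_iff.mp hp0 (WithLp.toLp 2 x, WithLp.toLp 2 y)
    (Set.mk_mem_prod ((sphere_iff (WithLp.toLp 2 x)).mpr hx) ((sphere_iff (WithLp.toLp 2 y)).mpr hy))

theorem stmt4 {d1 d2 : ℕ} (T : Fin d1 → Fin d2 → Fin d1 → Fin d2 → ℝ)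
    (hT : Biquadratic T) :
    bSpec T = sSup { r : ℝ | ∃ mu : ℝ, ∃ x : Fin d1 → ℝ, ∃ y : Fin d2 → ℝ,
      IsMEigen T mu x y ∧ r = |mu| } := by
  by_cases hd1 : d1 = 0
  · subst hd1
    have hS : {r : ℝ | ∃ x : Fin 0 → ℝ, ∃ y : Fin d2 → ℝ,
        (∑ i, x i ^ 2 = 1) ∧ (∑ j, y j ^ 2 = 1) ∧ r = |bform T x y|} = ∅ := by
      ext r
      simp only [Set.mem_setOf_eq, Set.mem_empty_iff_false, iff_false]
      rintro ⟨x, y, hx, -, -⟩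
      simp at hx
    have hE : {r : ℝ | ∃ mu : ℝ, ∃ x : Fin 0 → ℝ, ∃ y : Fin d2 → ℝ,
        IsMEigen T mu x y ∧ r = |mu|} = ∅ := by
      ext r
      simp only [Set.mem_setOf_eq, Set.mem_empty_iff_false, iff_false]
      rintro ⟨mu, x, y, ⟨-, -, hx, -⟩, -⟩
      simp at hx
    rw [bSpec, hS, hE]
  by_cases hd2 : d2 = 0
  · subst hd2
    have hS : {r : ℝ | ∃ x : Fin d1 → ℝ, ∃ y : Fin 0 → ℝ,
        (∑ i, x i ^ 2 = 1) ∧ (∑ j, y j ^ 2 = 1) ∧ r = |bform T x y|} = ∅ := by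
      ext r
      simp only [Set.mem_setOf_eq, Set.mem_empty_iff_false, iff_false]
      rintro ⟨x, y, -, hy, -⟩
      simp at hy
    have hE : {r : ℝ | ∃ mu : ℝ, ∃ x : Fin d1 → ℝ, ∃ y : Fin 0 → ℝ,
        IsMEigen T mu x y ∧ r = |mu|} = ∅ := by
      ext r
      simp only [Set.mem_setOf_eq, Set.mem_empty_iff_false, iff_false]
      rintro ⟨mu, x, y, ⟨-, -, -, hy⟩, -⟩
      simp at hy
    rw [bSpec, hS, hE]
  obtain ⟨x0, y0, hx0, hy0, hub⟩ :=
    exists_max (T := T) (Nat.pos_of_ne_zero hd1) (Nat.pos_of_ne_zero hd2)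
  have heig := eig_of_max hT x0 y0 hx0 hy0 hub
  have hgS : IsGreatest {r : ℝ | ∃ x : Fin d1 → ℝ, ∃ y : Fin d2 → ℝ,
      (∑ i, x i ^ 2 = 1) ∧ (∑ j, y j ^ 2 = 1) ∧ r = |bform T x y|} |bform T x0 y0| := by
    constructor
    · exact ⟨x0, y0, hx0, hy0, rfl⟩
    · rintro r ⟨x, y, hx, hy, rfl⟩
      exact hub x y hx hy
  have hgE : IsGreatest {r : ℝ | ∃ mu : ℝ, ∃ x : Fin d1 → ℝ, ∃ y : Fin d2 → ℝ,
      IsMEigen T mu x y ∧ r = |mu|} |bform T x0 y0| := by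
    constructor
    · exact ⟨bform T x0 y0, x0, y0, heig, rfl⟩
    · rintro r ⟨mu, x, y, he, rfl⟩
      rw [← bform_of_eig he]
      exact hub x y he.2.2.1 he.2.2.2
  rw [bSpec, hgS.csSup_eq, hgE.csSup_eq]
end
end

section
/- A biquadratic tensor T is positive semi-definite if and only if all of its M-eigenvalues are nonnegative, and positive definite if and only if all of its M-eigenvalues are positive. -/
noncomputable section

/-- `T` is positive semi-definite. -/
def PSDb {d1 d2 : ℕ} (T : Fin d1 → Fin d2 → Fin d1 → Fin d2 → ℝ) : Prop :=
  ∀ (x : Fin d1 → ℝ) (y : Fin d2 → ℝ), 0 ≤ bform T x y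

/-- `T` is positive definite. -/
def PDb {d1 d2 : ℕ} (T : Fin d1 → Fin d2 → Fin d1 → Fin d2 → ℝ) : Prop :=
  ∀ (x : Fin d1 → ℝ) (y : Fin d2 → ℝ),
    (∑ i, x i ^ 2 = 1) → (∑ j, y j ^ 2 = 1) → 0 < bform T x y

/-!
The minimum `μ` of `⟨T, x ⊗ y ⊗ x ⊗ y⟩` over pairs of unit vectors is attained at some `(x₀, y₀)`,
and by homogeneity the form is bounded below by `μ |x|² |y|²`. For fixed `y₀` the symmetric
quadratic form `x ↦ ⟨T, x ⊗ y₀ ⊗ x ⊗ y₀⟩ - μ |x|²` is therefore positive semidefinite and vanishes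
at `x₀`, so `x₀` lies in its kernel: this is the first M-eigenvalue equation, and the second
follows in the same way. Hence `μ` is an M-eigenvalue, while at any M-eigenpair the form equals the
eigenvalue; both equivalences follow.
-/

open Matrix

section Quadratic

variable {ι : Type*} [Fintype ι]

lemma dotProduct_self_eq_sum_sq (x : ι → ℝ) : x ⬝ᵥ x = ∑ i, x i ^ 2 := by
  simp [dotProduct, sq]

lemma isCompact_setOf_sum_sq_eq_one : IsCompact {x : ι → ℝ | ∑ i, x i ^ 2 = 1} := by
  refine (isCompact_univ_pi fun _ => isCompact_Icc (a := (-1 : ℝ)) (b := 1)).of_isClosed_subset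
    (isClosed_eq (by fun_prop) continuous_const) fun x hx i _ => ?_
  have : x i ^ 2 ≤ 1 := hx ▸ Finset.single_le_sum (fun i _ => sq_nonneg (x i)) (Finset.mem_univ i)
  exact abs_le.1 ((sq_le_one_iff_abs_le_one (x i)).1 this)

variable (ι) in
lemma exists_sum_sq_eq_one [Nonempty ι] : ∃ x : ι → ℝ, ∑ i, x i ^ 2 = 1 := by
  classical
  exact ⟨Pi.single (Classical.arbitrary ι) 1, by simp [Pi.single_apply]⟩

lemma mul_sum_sq_le_of_forall_sum_sq_eq_one {f : (ι → ℝ) → ℝ}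
    (hf : ∀ (c : ℝ) x, f (c • x) = c ^ 2 * f x) {m : ℝ}
    (h : ∀ x, ∑ i, x i ^ 2 = 1 → m ≤ f x) (x : ι → ℝ) : m * ∑ i, x i ^ 2 ≤ f x := by
  rcases (show 0 ≤ ∑ i, x i ^ 2 by positivity).eq_or_lt with hs | hs
  · obtain rfl : x = 0 := dotProduct_self_eq_zero.1 (dotProduct_self_eq_sum_sq x ▸ hs.symm)
    have hf0 : f 0 = 0 := by simpa using hf 0 0
    simp [hf0]
  · have hunit : ∑ i, ((√(∑ i, x i ^ 2))⁻¹ • x) i ^ 2 = 1 := by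
      simp [mul_pow, ← Finset.mul_sum, Real.sq_sqrt hs.le, hs.ne']
    have := h _ hunit
    rw [hf, inv_pow, Real.sq_sqrt hs.le, le_inv_mul_iff₀ hs] at this
    linarith

lemma Matrix.IsHermitian.mulVec_eq_smul_of_dotProduct_mulVec_eq {A : Matrix ι ι ℝ}
    (hA : A.IsHermitian) {μ : ℝ} (hle : ∀ x, μ * (x ⬝ᵥ x) ≤ x ⬝ᵥ A *ᵥ x) {x₀ : ι → ℝ}
    (heq : x₀ ⬝ᵥ A *ᵥ x₀ = μ * (x₀ ⬝ᵥ x₀)) : A *ᵥ x₀ = μ • x₀ := by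
  classical
  have hpsd : (A - μ • 1).PosSemidef :=
    .of_dotProduct_mulVec_nonneg (hA.sub (isHermitian_one.smul (.all μ))) fun x => by
      simpa [sub_mulVec, smul_mulVec] using hle x
  have := (hpsd.dotProduct_mulVec_zero_iff x₀).1 (by simp [sub_mulVec, smul_mulVec, heq])
  rwa [sub_mulVec, smul_mulVec, one_mulVec, sub_eq_zero] at this

end Quadratic

section Biquadratic

variable {d1 d2 : ℕ} (T : Fin d1 → Fin d2 → Fin d1 → Fin d2 → ℝ)

def contractY (y : Fin d2 → ℝ) : Matrix (Fin d1) (Fin d1) ℝ :=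
  of fun i p => ∑ j, ∑ q, T i j p q * y j * y q

def contractX (x : Fin d1 → ℝ) : Matrix (Fin d2) (Fin d2) ℝ :=
  of fun j q => ∑ i, ∑ p, T i j p q * x i * x p

lemma contractY_mulVec_apply (x : Fin d1 → ℝ) (y : Fin d2 → ℝ) (i : Fin d1) :
    (contractY T y *ᵥ x) i = ∑ j, ∑ p, ∑ q, T i j p q * y j * x p * y q := by
  simp only [contractY, mulVec, dotProduct, of_apply, Finset.sum_mul]
  rw [Finset.sum_comm]
  exact Finset.sum_congr rfl fun _ _ => Finset.sum_congr rfl fun _ _ =>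
    Finset.sum_congr rfl fun _ _ => by ring

lemma contractX_mulVec_apply (x : Fin d1 → ℝ) (y : Fin d2 → ℝ) (j : Fin d2) :
    (contractX T x *ᵥ y) j = ∑ i, ∑ p, ∑ q, T i j p q * x i * x p * y q := by
  simp only [contractX, mulVec, dotProduct, of_apply, Finset.sum_mul]
  rw [Finset.sum_comm]
  exact Finset.sum_congr rfl fun _ _ => by rw [Finset.sum_comm]

lemma bform_eq_dotProduct_contractY (x : Fin d1 → ℝ) (y : Fin d2 → ℝ) :
    bform T x y = x ⬝ᵥ contractY T y *ᵥ x := by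
  simp only [dotProduct, contractY_mulVec_apply, bform, Finset.mul_sum]
  exact Finset.sum_congr rfl fun _ _ => Finset.sum_congr rfl fun _ _ =>
    Finset.sum_congr rfl fun _ _ => Finset.sum_congr rfl fun _ _ => by ring

lemma bform_eq_dotProduct_contractX (x : Fin d1 → ℝ) (y : Fin d2 → ℝ) :
    bform T x y = y ⬝ᵥ contractX T x *ᵥ y := by
  simp only [dotProduct, contractX_mulVec_apply, bform, Finset.mul_sum]
  rw [Finset.sum_comm]
  exact Finset.sum_congr rfl fun _ _ => Finset.sum_congr rfl fun _ _ =>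
    Finset.sum_congr rfl fun _ _ => Finset.sum_congr rfl fun _ _ => by ring

lemma bform_smul_left (c : ℝ) (x : Fin d1 → ℝ) (y : Fin d2 → ℝ) :
    bform T (c • x) y = c ^ 2 * bform T x y := by
  simp only [bform_eq_dotProduct_contractY, mulVec_smul, dotProduct_smul, smul_dotProduct,
    smul_eq_mul]
  ring

lemma bform_smul_right (c : ℝ) (x : Fin d1 → ℝ) (y : Fin d2 → ℝ) :
    bform T x (c • y) = c ^ 2 * bform T x y := by
  simp only [bform_eq_dotProduct_contractX, mulVec_smul, dotProduct_smul, smul_dotProduct,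
    smul_eq_mul]
  ring

lemma continuous_bform : Continuous fun z : (Fin d1 → ℝ) × (Fin d2 → ℝ) => bform T z.1 z.2 := by
  unfold bform
  fun_prop

lemma exists_forall_bform_le [Nonempty (Fin d1)] [Nonempty (Fin d2)] :
    ∃ x₀ y₀, ∑ i, x₀ i ^ 2 = 1 ∧ ∑ j, y₀ j ^ 2 = 1 ∧
      ∀ x y, ∑ i, x i ^ 2 = 1 → ∑ j, y j ^ 2 = 1 → bform T x₀ y₀ ≤ bform T x y := by
  obtain ⟨x₁, hx₁⟩ := exists_sum_sq_eq_one (Fin d1)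
  obtain ⟨y₁, hy₁⟩ := exists_sum_sq_eq_one (Fin d2)
  obtain ⟨⟨x₀, y₀⟩, ⟨hx₀, hy₀⟩, hmin⟩ :=
    (isCompact_setOf_sum_sq_eq_one.prod isCompact_setOf_sum_sq_eq_one).exists_isMinOn
      ⟨(x₁, y₁), hx₁, hy₁⟩ (continuous_bform T).continuousOn
  exact ⟨x₀, y₀, hx₀, hy₀, fun x y hx hy => isMinOn_iff.1 hmin (x, y) ⟨hx, hy⟩⟩

variable {T}

lemma isHermitian_contractY (hT : Biquadratic T) (y : Fin d2 → ℝ) :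
    (contractY T y).IsHermitian :=
  IsHermitian.ext fun p i => by simp [contractY, (hT i _ p _).1]

lemma isHermitian_contractX (hT : Biquadratic T) (x : Fin d1 → ℝ) :
    (contractX T x).IsHermitian :=
  IsHermitian.ext fun q j => by
    simp only [contractX, of_apply, star_trivial]
    rw [Finset.sum_comm]
    exact Finset.sum_congr rfl fun p _ => Finset.sum_congr rfl fun i _ => by
      rw [(hT i j p q).2, (hT p q i j).1]; ring

lemma isMEigen_iff {μ : ℝ} {x : Fin d1 → ℝ} {y : Fin d2 → ℝ} :
    IsMEigen T μ x y ↔ contractY T y *ᵥ x = μ • x ∧ contractX T x *ᵥ y = μ • y ∧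
      ∑ i, x i ^ 2 = 1 ∧ ∑ j, y j ^ 2 = 1 := by
  simp [IsMEigen, funext_iff, contractY_mulVec_apply, contractX_mulVec_apply]

lemma bform_eq_of_isMEigen {μ : ℝ} {x : Fin d1 → ℝ} {y : Fin d2 → ℝ}
    (h : IsMEigen T μ x y) : bform T x y = μ := by
  obtain ⟨hx, -, hx1, -⟩ := isMEigen_iff.1 h
  rw [bform_eq_dotProduct_contractY, hx, dotProduct_smul, dotProduct_self_eq_sum_sq, hx1,
    smul_eq_mul, mul_one]

lemma exists_isMEigen_mul_le_bform [Nonempty (Fin d1)] [Nonempty (Fin d2)]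
    (hT : Biquadratic T) : ∃ μ x₀ y₀, IsMEigen T μ x₀ y₀ ∧
      ∀ x y, μ * ((∑ i, x i ^ 2) * ∑ j, y j ^ 2) ≤ bform T x y := by
  obtain ⟨x₀, y₀, hx₀, hy₀, hmin⟩ := exists_forall_bform_le T
  set μ := bform T x₀ y₀
  have hle_left (y : Fin d2 → ℝ) (hy : ∑ j, y j ^ 2 = 1) (x : Fin d1 → ℝ) :
      μ * ∑ i, x i ^ 2 ≤ bform T x y :=
    mul_sum_sq_le_of_forall_sum_sq_eq_one (bform_smul_left T · · y) (hmin · y · hy) x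
  have hle (x : Fin d1 → ℝ) (y : Fin d2 → ℝ) : μ * (∑ i, x i ^ 2) * ∑ j, y j ^ 2 ≤ bform T x y :=
    mul_sum_sq_le_of_forall_sum_sq_eq_one (bform_smul_right T · x) (hle_left · · x) y
  refine ⟨μ, x₀, y₀, isMEigen_iff.2 ⟨?_, ?_, hx₀, hy₀⟩, fun x y => mul_assoc μ _ _ ▸ hle x y⟩
  · refine (isHermitian_contractY hT y₀).mulVec_eq_smul_of_dotProduct_mulVec_eq (fun x => ?_) ?_
    · simpa [← bform_eq_dotProduct_contractY, dotProduct_self_eq_sum_sq] using hle_left y₀ hy₀ x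
    · rw [← bform_eq_dotProduct_contractY, dotProduct_self_eq_sum_sq, hx₀, mul_one]
  · refine (isHermitian_contractX hT x₀).mulVec_eq_smul_of_dotProduct_mulVec_eq (fun y => ?_) ?_
    · simpa [← bform_eq_dotProduct_contractX, dotProduct_self_eq_sum_sq, hx₀] using hle x₀ y
    · rw [← bform_eq_dotProduct_contractX, dotProduct_self_eq_sum_sq, hy₀, mul_one]

end Biquadratic

theorem stmt5 {d1 d2 : ℕ} (T : Fin d1 → Fin d2 → Fin d1 → Fin d2 → ℝ)
    (hT : Biquadratic T) :
    (PSDb T ↔ ∀ (mu : ℝ) (x : Fin d1 → ℝ) (y : Fin d2 → ℝ), IsMEigen T mu x y → 0 ≤ mu) ∧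
    (PDb T ↔ ∀ (mu : ℝ) (x : Fin d1 → ℝ) (y : Fin d2 → ℝ), IsMEigen T mu x y → 0 < mu) := by
  refine ⟨⟨fun h μ x y he => bform_eq_of_isMEigen he ▸ h x y, fun h x y => ?_⟩,
    ⟨fun h μ x y he => bform_eq_of_isMEigen he ▸ h x y he.2.2.1 he.2.2.2, fun h x y hx hy => ?_⟩⟩
  · rcases isEmpty_or_nonempty (Fin d1) with _ | _
    · simp [bform]
    rcases isEmpty_or_nonempty (Fin d2) with _ | _
    · simp [bform]
    obtain ⟨μ, x₀, y₀, he, hle⟩ := exists_isMEigen_mul_le_bform hT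
    exact (mul_nonneg (h μ x₀ y₀ he) (by positivity)).trans (hle x y)
  · rcases isEmpty_or_nonempty (Fin d1) with _ | _
    · simp at hx
    rcases isEmpty_or_nonempty (Fin d2) with _ | _
    · simp at hy
    obtain ⟨μ, x₀, y₀, he, hle⟩ := exists_isMEigen_mul_le_bform hT
    exact (h μ x₀ y₀ he).trans_le (by simpa [hx, hy] using hle x y)
end
end

section
/- If a biquadratic tensor T is positive semi-definite, then its spectral norm equals its largest M-eigenvalue. -/
noncomputable section

/-- RAYLEIGH LEMMA (inserted from ray.lean) -/
lemma rayleigh {d : ℕ} (A : Fin d → Fin d → ℝ) (hsym : ∀ i p, A i p = A p i)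
    (μ : ℝ) (x : Fin d → ℝ) (hx : ∑ i, x i ^ 2 = 1)
    (hmax : ∀ z : Fin d → ℝ, ∑ i, z i ^ 2 = 1 → ∑ i, ∑ p, A i p * z i * z p ≤ μ)
    (heq : ∑ i, ∑ p, A i p * x i * x p = μ) :
    ∀ i, ∑ p, A i p * x p = μ * x i := by
  set Q : (Fin d → ℝ) → ℝ := fun z => ∑ i, ∑ p, A i p * z i * z p with hQ
  set g : Fin d → ℝ := fun i => ∑ p, A i p * x p with hg
  set w : Fin d → ℝ := fun i => g i - μ * x i with hw
  -- homogeneity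
  have hQhom : ∀ (c : ℝ) (z : Fin d → ℝ), Q (fun i => c * z i) = c ^ 2 * Q z := by
    intro c z
    simp only [hQ, Finset.mul_sum]
    exact Finset.sum_congr rfl fun i _ => Finset.sum_congr rfl fun p _ => by ring
  -- Q z ≤ μ * ∑ z²
  have hQle : ∀ z : Fin d → ℝ, Q z ≤ μ * ∑ i, z i ^ 2 := by
    intro z
    by_cases hz : ∑ i, z i ^ 2 = 0
    · have hz0 : ∀ i, z i = 0 := by
        intro i
        have := (Finset.sum_eq_zero_iff_of_nonneg (fun i _ => sq_nonneg (z i))).mp hz i (Finset.mem_univ i)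
        exact (pow_eq_zero_iff two_ne_zero).mp this
      have : Q z = 0 := by
        simp only [hQ]
        refine Finset.sum_eq_zero fun i _ => Finset.sum_eq_zero fun p _ => by rw [hz0 i]; ring
      rw [this, hz, mul_zero]
    · have hs : 0 < ∑ i, z i ^ 2 :=
        lt_of_le_of_ne (Finset.sum_nonneg fun i _ => sq_nonneg _) (Ne.symm hz)
      set s := Real.sqrt (∑ i, z i ^ 2) with hsdef
      have hs0 : 0 < s := Real.sqrt_pos.mpr hs
      have hss : s ^ 2 = ∑ i, z i ^ 2 := Real.sq_sqrt hs.le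
      have hunit : ∑ i, (s⁻¹ * z i) ^ 2 = 1 := by
        simp only [mul_pow, ← Finset.mul_sum]
        rw [← hss]
        field_simp
      have hm : s⁻¹ ^ 2 * Q z ≤ μ := by rw [← hQhom]; exact hmax _ hunit
      have hs2 : (0:ℝ) < s ^ 2 := by positivity
      have h2 : Q z ≤ μ * s ^ 2 := by
        have h3 := mul_le_mul_of_nonneg_left hm hs2.le
        have h4 : s ^ 2 * (s⁻¹ ^ 2 * Q z) = Q z := by field_simp
        rw [h4] at h3
        linarith
      rw [hss] at h2; exact h2
  have hxg : ∑ i, x i * g i = μ := by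
    have : ∑ i, x i * g i = Q x := by
      simp only [hg, hQ, Finset.mul_sum]
      exact Finset.sum_congr rfl fun i _ => Finset.sum_congr rfl fun p _ => by ring
    rw [this]; exact heq
  have hwx : ∑ i, w i * x i = 0 := by
    have h1 : ∀ i, w i * x i = x i * g i - μ * x i ^ 2 := fun i => by simp only [hw]; ring
    rw [Finset.sum_congr rfl fun i _ => h1 i, Finset.sum_sub_distrib, hxg, ← Finset.mul_sum, hx]
    ring
  have hwg : ∑ i, w i * g i = ∑ i, w i ^ 2 := by
    have h1 : ∀ i, w i * g i = w i ^ 2 + μ * (w i * x i) := fun i => by simp only [hw]; ring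
    rw [Finset.sum_congr rfl fun i _ => h1 i, Finset.sum_add_distrib, ← Finset.mul_sum, hwx]
    ring
  -- cross term
  have hcross : ∀ u v : Fin d → ℝ, ∑ i, ∑ p, A i p * v i * u p = ∑ i, ∑ p, A i p * u i * v p := by
    intro u v
    rw [Finset.sum_comm]
    exact Finset.sum_congr rfl fun i _ => Finset.sum_congr rfl fun p _ => by rw [hsym]; ring
  have hxw : ∑ i, ∑ p, A i p * x i * w p = ∑ i, w i * g i := by
    rw [← hcross]
    simp only [hg, Finset.mul_sum]
    exact Finset.sum_congr rfl fun i _ => Finset.sum_congr rfl fun p _ => by ring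
  set W := ∑ i, w i ^ 2 with hW
  have hWnn : 0 ≤ W := Finset.sum_nonneg fun i _ => sq_nonneg _
  -- expansion
  have hexp : ∀ t : ℝ, Q (fun i => x i + t * w i) = μ + 2 * t * W + t ^ 2 * Q w := by
    intro t
    have h1 : Q (fun i => x i + t * w i)
        = Q x + t * (∑ i, ∑ p, A i p * x i * w p) + t * (∑ i, ∑ p, A i p * w i * x p)
          + t ^ 2 * Q w := by
      simp only [hQ, Finset.mul_sum, ← Finset.sum_add_distrib]
      exact Finset.sum_congr rfl fun i _ => Finset.sum_congr rfl fun p _ => by ring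
    rw [h1, hcross x w, hxw, hwg, show Q x = μ from heq]; ring
  have hnorm : ∀ t : ℝ, ∑ i, (x i + t * w i) ^ 2 = 1 + t ^ 2 * W := by
    intro t
    have h1 : ∀ i, (x i + t * w i) ^ 2 = x i ^ 2 + (2 * t) * (w i * x i) + t ^ 2 * w i ^ 2 :=
      fun i => by ring
    rw [Finset.sum_congr rfl fun i _ => h1 i, Finset.sum_add_distrib, Finset.sum_add_distrib,
      ← Finset.mul_sum, ← Finset.mul_sum, hwx, hx]
    ring
  have key : ∀ t : ℝ, 2 * t * W ≤ t ^ 2 * (μ * W - Q w) := by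
    intro t
    have := hQle (fun i => x i + t * w i)
    rw [hexp t, hnorm t] at this
    nlinarith [this]
  have hW0 : W = 0 := by
    by_contra hne
    have hWpos : 0 < W := lt_of_le_of_ne hWnn (Ne.symm hne)
    set C := μ * W - Q w with hC
    have hC2 : 2 * W ≤ C := by have := key 1; nlinarith [this]
    have hCpos : 0 < C := lt_of_lt_of_le (by positivity) hC2
    have := key (W / C)
    rw [div_pow] at this
    have h3 : W ^ 2 / C ^ 2 * C = W ^ 2 / C := by field_simp
    rw [h3] at this
    have h4 : 2 * (W / C) * W = 2 * W ^ 2 / C := by ring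
    rw [h4] at this
    have := (div_le_div_iff_of_pos_right hCpos).mp this
    nlinarith
  have hwzero : ∀ i, w i = 0 := by
    intro i
    have := (Finset.sum_eq_zero_iff_of_nonneg (fun i _ => sq_nonneg (w i))).mp hW0 i (Finset.mem_univ i)
    exact (pow_eq_zero_iff two_ne_zero).mp this
  intro i
  have := hwzero i
  simp only [hw, hg] at this
  linarith [this]

/-- swap indices 2 and 4 -/
lemma aux_swap24 {d1 d2 : ℕ} {T : Fin d1 → Fin d2 → Fin d1 → Fin d2 → ℝ}
    (hT : Biquadratic T) (i p : Fin d1) (j q : Fin d2) : T i j p q = T i q p j := by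
  rw [(hT i j p q).1]
  exact ((hT i q p j).2).symm

lemma aux_bridge1 {d1 d2 : ℕ} (T : Fin d1 → Fin d2 → Fin d1 → Fin d2 → ℝ)
    (y : Fin d2 → ℝ) (z : Fin d1 → ℝ) :
    ∑ i, ∑ p, (∑ j, ∑ q, T i j p q * y j * y q) * z i * z p = bform T z y := by
  unfold bform
  simp only [Finset.sum_mul]
  refine Finset.sum_congr rfl fun i _ => Finset.sum_comm.trans ?_
  exact Finset.sum_congr rfl fun j _ => Finset.sum_congr rfl fun p _ =>
    Finset.sum_congr rfl fun q _ => by ring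

lemma aux_bridge2 {d1 d2 : ℕ} (T : Fin d1 → Fin d2 → Fin d1 → Fin d2 → ℝ)
    (x : Fin d1 → ℝ) (z : Fin d2 → ℝ) :
    ∑ j, ∑ q, (∑ i, ∑ p, T i j p q * x i * x p) * z j * z q = bform T x z := by
  unfold bform
  simp only [Finset.sum_mul]
  have e1 : (∑ j, ∑ q, ∑ i, ∑ p, T i j p q * x i * x p * z j * z q)
      = ∑ j, ∑ i, ∑ q, ∑ p, T i j p q * x i * x p * z j * z q :=
    Finset.sum_congr rfl fun j _ => Finset.sum_comm
  have e2 : (∑ j, ∑ i, ∑ q, ∑ p, T i j p q * x i * x p * z j * z q)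
      = ∑ i, ∑ j, ∑ q, ∑ p, T i j p q * x i * x p * z j * z q := Finset.sum_comm
  have e3 : (∑ i, ∑ j, ∑ q, ∑ p, T i j p q * x i * x p * z j * z q)
      = ∑ i, ∑ j, ∑ p, ∑ q, T i j p q * x i * x p * z j * z q :=
    Finset.sum_congr rfl fun i _ => Finset.sum_congr rfl fun j _ => Finset.sum_comm
  rw [e1, e2, e3]
  exact Finset.sum_congr rfl fun i _ => Finset.sum_congr rfl fun j _ =>
    Finset.sum_congr rfl fun p _ => Finset.sum_congr rfl fun q _ => by ring

/-- contracting the first eigen-equation recovers the form value -/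
lemma aux_contract {d1 d2 : ℕ} (T : Fin d1 → Fin d2 → Fin d1 → Fin d2 → ℝ)
    (mu : ℝ) (x : Fin d1 → ℝ) (y : Fin d2 → ℝ) (hx : ∑ i, x i ^ 2 = 1)
    (heig : ∀ i, ∑ j, ∑ p, ∑ q, T i j p q * y j * x p * y q = mu * x i) :
    bform T x y = mu := by
  have h1 : bform T x y = ∑ i, x i * (∑ j, ∑ p, ∑ q, T i j p q * y j * x p * y q) := by
    unfold bform
    simp only [Finset.mul_sum]
    exact Finset.sum_congr rfl fun i _ => Finset.sum_congr rfl fun j _ =>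
      Finset.sum_congr rfl fun p _ => Finset.sum_congr rfl fun q _ => by ring
  rw [h1, Finset.sum_congr rfl fun i _ => by rw [heig i]]
  have h2 : ∑ i, x i * (mu * x i) = mu * ∑ i, x i ^ 2 := by
    rw [Finset.mul_sum]
    exact Finset.sum_congr rfl fun i _ => by ring
  rw [h2, hx, mul_one]

lemma aux_sphere_compact {d : ℕ} : IsCompact {x : Fin d → ℝ | ∑ i, x i ^ 2 = 1} := by
  apply Metric.isCompact_of_isClosed_isBounded
  · exact isClosed_eq (continuous_finset_sum _ fun i _ => (continuous_apply i).pow 2)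
      continuous_const
  · rw [isBounded_iff_forall_norm_le]
    refine ⟨1, fun x hx => ?_⟩
    rw [pi_norm_le_iff_of_nonneg zero_le_one]
    intro i
    have hterm : x i ^ 2 ≤ 1 := by
      have := Finset.single_le_sum (f := fun j => x j ^ 2) (fun j _ => sq_nonneg (x j))
        (Finset.mem_univ i)
      rw [hx] at this; exact this
    rw [Real.norm_eq_abs, abs_le]
    constructor <;> nlinarith

theorem stmt6 {d1 d2 : ℕ} (T : Fin d1 → Fin d2 → Fin d1 → Fin d2 → ℝ)
    (hT : Biquadratic T)
    (hpsd : ∀ (x : Fin d1 → ℝ) (y : Fin d2 → ℝ), 0 ≤ bform T x y) :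
    bSpec T = sSup { mu : ℝ | ∃ x : Fin d1 → ℝ, ∃ y : Fin d2 → ℝ, IsMEigen T mu x y } := by
  by_cases h1 : ∃ x : Fin d1 → ℝ, ∑ i, x i ^ 2 = 1
  case neg =>
    have e1 : { r : ℝ | ∃ x : Fin d1 → ℝ, ∃ y : Fin d2 → ℝ,
        (∑ i, x i ^ 2 = 1) ∧ (∑ j, y j ^ 2 = 1) ∧ r = |bform T x y| } = ∅ :=
      Set.eq_empty_iff_forall_notMem.mpr fun r ⟨x, y, hx, _, _⟩ => h1 ⟨x, hx⟩
    have e2 : { mu : ℝ | ∃ x : Fin d1 → ℝ, ∃ y : Fin d2 → ℝ, IsMEigen T mu x y } = ∅ :=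
      Set.eq_empty_iff_forall_notMem.mpr fun r ⟨x, y, hme⟩ => h1 ⟨x, hme.2.2.1⟩
    unfold bSpec
    rw [e1, e2]
  case pos =>
  by_cases h2 : ∃ y : Fin d2 → ℝ, ∑ j, y j ^ 2 = 1
  case neg =>
    have e1 : { r : ℝ | ∃ x : Fin d1 → ℝ, ∃ y : Fin d2 → ℝ,
        (∑ i, x i ^ 2 = 1) ∧ (∑ j, y j ^ 2 = 1) ∧ r = |bform T x y| } = ∅ :=
      Set.eq_empty_iff_forall_notMem.mpr fun r ⟨x, y, _, hy, _⟩ => h2 ⟨y, hy⟩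
    have e2 : { mu : ℝ | ∃ x : Fin d1 → ℝ, ∃ y : Fin d2 → ℝ, IsMEigen T mu x y } = ∅ :=
      Set.eq_empty_iff_forall_notMem.mpr fun r ⟨x, y, hme⟩ => h2 ⟨y, hme.2.2.2⟩
    unfold bSpec
    rw [e1, e2]
  case pos =>
  obtain ⟨x₁, hx₁⟩ := h1
  obtain ⟨y₁, hy₁⟩ := h2
  set S1 : Set (Fin d1 → ℝ) := {x | ∑ i, x i ^ 2 = 1} with hS1def
  set S2 : Set (Fin d2 → ℝ) := {y | ∑ j, y j ^ 2 = 1} with hS2def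
  have hK : IsCompact (S1 ×ˢ S2) := aux_sphere_compact.prod aux_sphere_compact
  have hne : (S1 ×ˢ S2).Nonempty := ⟨(x₁, y₁), ⟨hx₁, hy₁⟩⟩
  have hcont : Continuous fun p : (Fin d1 → ℝ) × (Fin d2 → ℝ) => bform T p.1 p.2 := by
    unfold bform
    refine continuous_finset_sum _ fun i _ => continuous_finset_sum _ fun j _ =>
      continuous_finset_sum _ fun p _ => continuous_finset_sum _ fun q _ => ?_
    exact ((((continuous_const.mul ((continuous_apply i).comp continuous_fst)).mul
      ((continuous_apply j).comp continuous_snd)).mul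
      ((continuous_apply p).comp continuous_fst)).mul
      ((continuous_apply q).comp continuous_snd))
  obtain ⟨⟨x₀, y₀⟩, hmem, hismax⟩ := hK.exists_isMaxOn hne hcont.continuousOn
  have hx₀ : ∑ i, x₀ i ^ 2 = 1 := hmem.1
  have hy₀ : ∑ j, y₀ j ^ 2 = 1 := hmem.2
  set μ : ℝ := bform T x₀ y₀ with hμdef
  have hμnn : 0 ≤ μ := hpsd x₀ y₀
  have hmaxB : ∀ (x : Fin d1 → ℝ) (y : Fin d2 → ℝ),
      (∑ i, x i ^ 2 = 1) → (∑ j, y j ^ 2 = 1) → bform T x y ≤ μ := by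
    intro x y hx hy
    have hmm : (x, y) ∈ S1 ×ˢ S2 := Set.mk_mem_prod hx hy
    have h := hismax hmm
    simpa using h
  -- first eigen-equation via rayleigh
  have heig1 : ∀ i, ∑ j, ∑ p, ∑ q, T i j p q * y₀ j * x₀ p * y₀ q = μ * x₀ i := by
    have hr := rayleigh (fun i p => ∑ j, ∑ q, T i j p q * y₀ j * y₀ q)
      (fun i p => Finset.sum_congr rfl fun j _ => Finset.sum_congr rfl fun q _ => by
        rw [(hT i j p q).1])
      μ x₀ hx₀
      (fun z hz => by rw [aux_bridge1]; exact hmaxB z y₀ hz hy₀)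
      (by rw [aux_bridge1])
    intro i
    have hconv : (∑ p, (∑ j, ∑ q, T i j p q * y₀ j * y₀ q) * x₀ p)
        = ∑ j, ∑ p, ∑ q, T i j p q * y₀ j * x₀ p * y₀ q := by
      simp only [Finset.sum_mul]
      exact Finset.sum_comm.trans (Finset.sum_congr rfl fun j _ =>
        Finset.sum_congr rfl fun p _ => Finset.sum_congr rfl fun q _ => by ring)
    rw [← hconv]
    exact hr i
  -- second eigen-equation via rayleigh
  have heig2 : ∀ j, ∑ i, ∑ p, ∑ q, T i j p q * x₀ i * x₀ p * y₀ q = μ * y₀ j := by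
    have hr := rayleigh (fun j q => ∑ i, ∑ p, T i j p q * x₀ i * x₀ p)
      (fun j q => Finset.sum_congr rfl fun i _ => Finset.sum_congr rfl fun p _ => by
        rw [aux_swap24 hT i p j q])
      μ y₀ hy₀
      (fun z hz => by rw [aux_bridge2]; exact hmaxB x₀ z hx₀ hz)
      (by rw [aux_bridge2])
    intro j
    have hconv : (∑ q, (∑ i, ∑ p, T i j p q * x₀ i * x₀ p) * y₀ q)
        = ∑ i, ∑ p, ∑ q, T i j p q * x₀ i * x₀ p * y₀ q := by
      simp only [Finset.sum_mul]
      exact Finset.sum_comm.trans (Finset.sum_congr rfl fun i _ =>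
        Finset.sum_comm.trans (Finset.sum_congr rfl fun p _ =>
          Finset.sum_congr rfl fun q _ => by ring))
    rw [← hconv]
    exact hr j
  have hmeig : IsMEigen T μ x₀ y₀ := ⟨heig1, heig2, hx₀, hy₀⟩
  have hgr1 : IsGreatest { r : ℝ | ∃ x : Fin d1 → ℝ, ∃ y : Fin d2 → ℝ,
      (∑ i, x i ^ 2 = 1) ∧ (∑ j, y j ^ 2 = 1) ∧ r = |bform T x y| } μ := by
    constructor
    · exact ⟨x₀, y₀, hx₀, hy₀, (abs_of_nonneg hμnn).symm⟩
    · rintro r ⟨x, y, hx, hy, rfl⟩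
      rw [abs_of_nonneg (hpsd x y)]
      exact hmaxB x y hx hy
  have hgr2 : IsGreatest { mu : ℝ | ∃ x : Fin d1 → ℝ, ∃ y : Fin d2 → ℝ,
      IsMEigen T mu x y } μ := by
    constructor
    · exact ⟨x₀, y₀, hmeig⟩
    · rintro r ⟨x, y, hme⟩
      have := aux_contract T r x y hme.2.2.1 hme.1
      rw [← this]
      exact hmaxB x y hme.2.2.1 hme.2.2.2
  unfold bSpec
  rw [hgr1.csSup_eq, hgr2.csSup_eq]
end
end

section
/- If λ ≠ 0 is a singular value of a third order tensor A with singular vectors x, y, z, then λ² is an M-eigenvalue of the contracted biquadratic tensor T^{(3)} with M-eigenvectors x and y. -/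
noncomputable section

/-- `lam` is a singular value of the third order tensor `A` with singular vectors `x, y, z`. -/
def IsSingularValue {d1 d2 d3 : ℕ} (A : Fin d1 → Fin d2 → Fin d3 → ℝ)
    (lam : ℝ) (x : Fin d1 → ℝ) (y : Fin d2 → ℝ) (z : Fin d3 → ℝ) : Prop :=
  (∀ i, ∑ j, ∑ k, A i j k * y j * z k = lam * x i) ∧
  (∀ j, ∑ i, ∑ k, A i j k * x i * z k = lam * y j) ∧
  (∀ k, ∑ i, ∑ j, A i j k * x i * y j = lam * z k) ∧
  (∑ i, x i ^ 2 = 1) ∧ (∑ j, y j ^ 2 = 1) ∧ (∑ k, z k ^ 2 = 1)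

/-- Contraction of `A` with itself on the third index. -/
def T3 {d1 d2 d3 : ℕ} (A : Fin d1 → Fin d2 → Fin d3 → ℝ) :
    Fin d1 → Fin d2 → Fin d1 → Fin d2 → ℝ :=
  fun i j p q => ∑ k, A i j k * A p q k

/-! Since `T3 A` is `A` contracted with itself along the third index, contracting `T3 A` with
`x ⊗ y` in its last two slots first contracts `A` with `x ⊗ y`, which by the third singular
equation gives `lam • z`; the first (resp. second) singular equation then turns the remaining
contraction of `A` with `y ⊗ z` (resp. `x ⊗ z`) into `lam • x` (resp. `lam • y`). -/

theorem T3_contract_yxy {d1 d2 d3 : ℕ} (A : Fin d1 → Fin d2 → Fin d3 → ℝ)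
    (x : Fin d1 → ℝ) (y : Fin d2 → ℝ) (i : Fin d1) :
    ∑ j, ∑ p, ∑ q, T3 A i j p q * y j * x p * y q =
      ∑ j, ∑ k, A i j k * y j * ∑ p, ∑ q, A p q k * x p * y q := by
  simp only [T3, Finset.sum_mul, Finset.mul_sum]
  refine Finset.sum_congr rfl fun j _ => ?_
  symm
  rw [Finset.sum_comm]
  refine Finset.sum_congr rfl fun p _ => ?_
  rw [Finset.sum_comm]
  exact Finset.sum_congr rfl fun q _ => Finset.sum_congr rfl fun k _ => by ring

theorem T3_contract_xxy {d1 d2 d3 : ℕ} (A : Fin d1 → Fin d2 → Fin d3 → ℝ)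
    (x : Fin d1 → ℝ) (y : Fin d2 → ℝ) (j : Fin d2) :
    ∑ i, ∑ p, ∑ q, T3 A i j p q * x i * x p * y q =
      ∑ i, ∑ k, A i j k * x i * ∑ p, ∑ q, A p q k * x p * y q := by
  simp only [T3, Finset.sum_mul, Finset.mul_sum]
  refine Finset.sum_congr rfl fun i _ => ?_
  symm
  rw [Finset.sum_comm]
  refine Finset.sum_congr rfl fun p _ => ?_
  rw [Finset.sum_comm]
  exact Finset.sum_congr rfl fun q _ => Finset.sum_congr rfl fun k _ => by ring

theorem stmt8_general {d1 d2 d3 : ℕ} (A : Fin d1 → Fin d2 → Fin d3 → ℝ)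
    (lam : ℝ) (x : Fin d1 → ℝ) (y : Fin d2 → ℝ) (z : Fin d3 → ℝ)
    (h : IsSingularValue A lam x y z) :
    IsMEigen (T3 A) (lam ^ 2) x y := by
  obtain ⟨hx_eq, hy_eq, hz_eq, hx, hy, -⟩ := h
  refine ⟨fun i => ?_, fun j => ?_, hx, hy⟩
  · simp only [T3_contract_yxy, hz_eq, mul_left_comm _ lam, ← Finset.mul_sum, hx_eq]
    ring
  · simp only [T3_contract_xxy, hz_eq, mul_left_comm _ lam, ← Finset.mul_sum, hy_eq]
    ring

theorem stmt8 {d1 d2 d3 : ℕ} (A : Fin d1 → Fin d2 → Fin d3 → ℝ)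
    (lam : ℝ) (hlam : lam ≠ 0) (x : Fin d1 → ℝ) (y : Fin d2 → ℝ) (z : Fin d3 → ℝ)
    (h : IsSingularValue A lam x y z) :
    IsMEigen (T3 A) (lam ^ 2) x y :=
  stmt8_general A lam x y z h
end
end

section
/- If μ = λ² ≠ 0 is an M-eigenvalue of the contracted biquadratic tensor T^{(3)} with M-eigenvectors x and y, then λ is a singular value of A with singular vectors x, y, and z, where z_k = (1/λ) ∑_{i,j} a_{ijk} x_i y_j; in particular, z is a unit vector. -/
noncomputable section

/-!
Write `S = A x y` for the vector `S k = ∑ i j, a_{ijk} x_i y_j`. Contracting `T^{(3)}` against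
`y, x, y` (resp. `x, x, y`) is the same as contracting `A` against `y, S` (resp. `x, S`), so the
M-eigenvalue equations say `A · y · S = λ² x` and `A · x · S = λ² y`. Moreover
`⟨T^{(3)}, x ⊗ y ⊗ x ⊗ y⟩ = ‖S‖²`, and for M-eigenvectors this form equals the eigenvalue, so
`‖S‖ = |λ|`. Hence `z = S / λ` is a unit vector and `(x, y, z)` satisfies the singular value
equations.
-/

def contract12 {d1 d2 d3 : ℕ} (A : Fin d1 → Fin d2 → Fin d3 → ℝ) (x : Fin d1 → ℝ)
    (y : Fin d2 → ℝ) : Fin d3 → ℝ :=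
  fun k => ∑ i, ∑ j, A i j k * x i * y j

section
variable {d1 d2 d3 : ℕ} (A : Fin d1 → Fin d2 → Fin d3 → ℝ) (x : Fin d1 → ℝ) (y : Fin d2 → ℝ)

theorem T3_contract_left (i : Fin d1) :
    ∑ j, ∑ p, ∑ q, T3 A i j p q * y j * x p * y q =
      ∑ j, ∑ k, A i j k * y j * contract12 A x y k := by
  simp only [T3, contract12, Finset.sum_mul, Finset.mul_sum]
  refine Finset.sum_congr rfl fun j _ => ?_
  conv_rhs => rw [Finset.sum_comm]
  refine Finset.sum_congr rfl fun p _ => ?_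
  conv_rhs => rw [Finset.sum_comm]
  refine Finset.sum_congr rfl fun q _ => Finset.sum_congr rfl fun k _ => ?_
  ring

theorem T3_contract_right (j : Fin d2) :
    ∑ i, ∑ p, ∑ q, T3 A i j p q * x i * x p * y q =
      ∑ i, ∑ k, A i j k * x i * contract12 A x y k := by
  simp only [T3, contract12, Finset.sum_mul, Finset.mul_sum]
  refine Finset.sum_congr rfl fun i _ => ?_
  conv_rhs => rw [Finset.sum_comm]
  refine Finset.sum_congr rfl fun p _ => ?_
  conv_rhs => rw [Finset.sum_comm]
  refine Finset.sum_congr rfl fun q _ => Finset.sum_congr rfl fun k _ => ?_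
  ring

theorem bform_T3 : bform (T3 A) x y = ∑ k, contract12 A x y k ^ 2 := by
  simp only [bform, T3, contract12, sq, Finset.sum_mul, Finset.mul_sum]
  conv_rhs => rw [Finset.sum_comm]
  refine Finset.sum_congr rfl fun i _ => ?_
  conv_rhs => rw [Finset.sum_comm]
  refine Finset.sum_congr rfl fun j _ => ?_
  conv_rhs => rw [Finset.sum_comm]
  refine Finset.sum_congr rfl fun p _ => ?_
  conv_rhs => rw [Finset.sum_comm]
  refine Finset.sum_congr rfl fun q _ => Finset.sum_congr rfl fun k _ => ?_
  ring

end

theorem sum_sum_mul_const_mul {ι κ : Type*} [Fintype ι] [Fintype κ] (f : ι → κ → ℝ) (c : ℝ)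
    (g : κ → ℝ) : ∑ j, ∑ k, f j k * (c * g k) = c * ∑ j, ∑ k, f j k * g k := by
  simp_rw [Finset.mul_sum, mul_left_comm c]

theorem IsMEigen.bform_eq {d1 d2 : ℕ} {T : Fin d1 → Fin d2 → Fin d1 → Fin d2 → ℝ} {mu : ℝ}
    {x : Fin d1 → ℝ} {y : Fin d2 → ℝ} (h : IsMEigen T mu x y) : bform T x y = mu := by
  obtain ⟨hx, -, hx1, -⟩ := h
  calc bform T x y = ∑ i, x i * ∑ j, ∑ p, ∑ q, T i j p q * y j * x p * y q := by
        simp only [bform, Finset.mul_sum]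
        refine Finset.sum_congr rfl fun i _ => Finset.sum_congr rfl fun j _ =>
          Finset.sum_congr rfl fun p _ => Finset.sum_congr rfl fun q _ => ?_
        ring
    _ = mu := by simp_rw [hx, mul_left_comm (x _) mu, ← sq, ← Finset.mul_sum, hx1, mul_one]

theorem stmt9 {d1 d2 d3 : ℕ} (A : Fin d1 → Fin d2 → Fin d3 → ℝ)
    (lam : ℝ) (hlam : lam ≠ 0) (x : Fin d1 → ℝ) (y : Fin d2 → ℝ)
    (h : IsMEigen (T3 A) (lam ^ 2) x y) :
    IsSingularValue A lam x y (fun k => (1 / lam) * ∑ i, ∑ j, A i j k * x i * y j) := by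
  have hS : ∑ k, contract12 A x y k ^ 2 = lam ^ 2 := (bform_T3 A x y).symm.trans h.bform_eq
  refine ⟨fun i => ?_, fun j => ?_, fun k => ?_, h.2.2.1, h.2.2.2, ?_⟩
  · calc ∑ j, ∑ k, A i j k * y j * (1 / lam * contract12 A x y k)
        _ = 1 / lam * (lam ^ 2 * x i) := by
          rw [sum_sum_mul_const_mul, ← T3_contract_left, h.1 i]
        _ = lam * x i := by field_simp
  · calc ∑ i, ∑ k, A i j k * x i * (1 / lam * contract12 A x y k)
        _ = 1 / lam * (lam ^ 2 * y j) := by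
          rw [sum_sum_mul_const_mul, ← T3_contract_right, h.2.1 j]
        _ = lam * y j := by field_simp
  · change contract12 A x y k = lam * (1 / lam * contract12 A x y k)
    field_simp
  · change ∑ k, (1 / lam * contract12 A x y k) ^ 2 = 1
    simp_rw [mul_pow, ← Finset.mul_sum, hS]
    field_simp
end
end

section
/- For a third order tensor A ∈ ℝ^{d1×d2×d3} and the contracted biquadratic tensor T^{(3)}, the nuclear norm satisfies ‖A‖_*² ≥ ‖T^{(3)}‖_*. -/
/-!
Squaring a decomposition `A = ∑ₘ λₘ uₘ ⊗ vₘ ⊗ wₘ` gives the decomposition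
`T⁽³⁾ = ∑ₘₙ λₘ λₙ ⟨wₘ, wₙ⟩ uₘ ⊗ vₘ ⊗ uₙ ⊗ vₙ`, and by Cauchy–Schwarz `|⟨wₘ, wₙ⟩| ≤ 1`,
so its weights sum to at most `(∑ₘ |λₘ|)²`. Taking the infimum over decompositions of `A`
gives `‖T⁽³⁾‖_* ≤ ‖A‖_*²`.
-/

noncomputable section

/-- Nuclear norm of a third order tensor. -/
noncomputable def nuc3 {d1 d2 d3 : ℕ} (A : Fin d1 → Fin d2 → Fin d3 → ℝ) : ℝ :=
  sInf { s : ℝ | ∃ r : ℕ, ∃ lam : Fin r → ℝ, ∃ u : Fin r → Fin d1 → ℝ,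
    ∃ v : Fin r → Fin d2 → ℝ, ∃ w : Fin r → Fin d3 → ℝ,
    (∀ m, ∑ i, u m i ^ 2 = 1) ∧ (∀ m, ∑ j, v m j ^ 2 = 1) ∧ (∀ m, ∑ k, w m k ^ 2 = 1) ∧
    (∀ i j k, A i j k = ∑ m, lam m * u m i * v m j * w m k) ∧
    s = ∑ m, |lam m| }

/-- Nuclear norm of a fourth order tensor of size `d1 × d2 × d1 × d2`. -/
noncomputable def nuc4 {d1 d2 : ℕ} (T : Fin d1 → Fin d2 → Fin d1 → Fin d2 → ℝ) : ℝ :=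
  sInf { s : ℝ | ∃ r : ℕ, ∃ lam : Fin r → ℝ, ∃ u : Fin r → Fin d1 → ℝ,
    ∃ v : Fin r → Fin d2 → ℝ, ∃ w : Fin r → Fin d1 → ℝ, ∃ t : Fin r → Fin d2 → ℝ,
    (∀ m, ∑ i, u m i ^ 2 = 1) ∧ (∀ m, ∑ j, v m j ^ 2 = 1) ∧
    (∀ m, ∑ i, w m i ^ 2 = 1) ∧ (∀ m, ∑ j, t m j ^ 2 = 1) ∧
    (∀ i j p q, T i j p q = ∑ m, lam m * u m i * v m j * w m p * t m q) ∧
    s = ∑ m, |lam m| }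

namespace NuclearNorm

variable {d1 d2 d3 : ℕ}

/-- The set of weight sums whose infimum is `nuc3 A`. -/
def nuc3Set (A : Fin d1 → Fin d2 → Fin d3 → ℝ) : Set ℝ :=
  { s : ℝ | ∃ r : ℕ, ∃ lam : Fin r → ℝ, ∃ u : Fin r → Fin d1 → ℝ,
    ∃ v : Fin r → Fin d2 → ℝ, ∃ w : Fin r → Fin d3 → ℝ,
    (∀ m, ∑ i, u m i ^ 2 = 1) ∧ (∀ m, ∑ j, v m j ^ 2 = 1) ∧ (∀ m, ∑ k, w m k ^ 2 = 1) ∧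
    (∀ i j k, A i j k = ∑ m, lam m * u m i * v m j * w m k) ∧
    s = ∑ m, |lam m| }

theorem nonneg_of_mem_nuc3Set {A : Fin d1 → Fin d2 → Fin d3 → ℝ} {s : ℝ}
    (hs : s ∈ nuc3Set A) : 0 ≤ s := by
  obtain ⟨r, lam, u, v, w, -, -, -, -, rfl⟩ := hs
  positivity

theorem sum_abs_mem_nuc3Set {ι : Type*} [Fintype ι] {A : Fin d1 → Fin d2 → Fin d3 → ℝ}
    (lam : ι → ℝ) (u : ι → Fin d1 → ℝ) (v : ι → Fin d2 → ℝ) (w : ι → Fin d3 → ℝ)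
    (hu : ∀ m, ∑ i, u m i ^ 2 = 1) (hv : ∀ m, ∑ j, v m j ^ 2 = 1)
    (hw : ∀ m, ∑ k, w m k ^ 2 = 1)
    (hA : ∀ i j k, A i j k = ∑ m, lam m * u m i * v m j * w m k) :
    ∑ m, |lam m| ∈ nuc3Set A := by
  let e := (Fintype.equivFin ι).symm
  refine ⟨Fintype.card ι, lam ∘ e, u ∘ e, v ∘ e, w ∘ e, fun m => hu _, fun m => hv _,
    fun m => hw _, fun i j k => ?_, ?_⟩
  · rw [hA]
    exact (e.sum_comp fun m => lam m * u m i * v m j * w m k).symm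
  · exact (e.sum_comp fun m => |lam m|).symm

theorem sum_sq_single_one {n : ℕ} (a : Fin n) :
    ∑ i, (Pi.single a 1 : Fin n → ℝ) i ^ 2 = 1 := by
  simp [Pi.single_apply, ite_pow]

theorem nuc3Set_nonempty (A : Fin d1 → Fin d2 → Fin d3 → ℝ) : (nuc3Set A).Nonempty := by
  refine ⟨_, sum_abs_mem_nuc3Set (ι := Fin d1 × Fin d2 × Fin d3)
    (fun m => A m.1 m.2.1 m.2.2) (fun m => Pi.single m.1 1) (fun m => Pi.single m.2.1 1)
    (fun m => Pi.single m.2.2 1) (fun _ => sum_sq_single_one _) (fun _ => sum_sq_single_one _)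
    (fun _ => sum_sq_single_one _) fun i j k => ?_⟩
  simp [Fintype.sum_prod_type, Pi.single_apply]

theorem nuc4_le_sum_abs {ι : Type*} [Fintype ι] {T : Fin d1 → Fin d2 → Fin d1 → Fin d2 → ℝ}
    (lam : ι → ℝ) (u : ι → Fin d1 → ℝ) (v : ι → Fin d2 → ℝ) (w : ι → Fin d1 → ℝ)
    (t : ι → Fin d2 → ℝ) (hu : ∀ m, ∑ i, u m i ^ 2 = 1) (hv : ∀ m, ∑ j, v m j ^ 2 = 1)
    (hw : ∀ m, ∑ i, w m i ^ 2 = 1) (ht : ∀ m, ∑ j, t m j ^ 2 = 1)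
    (hT : ∀ i j p q, T i j p q = ∑ m, lam m * u m i * v m j * w m p * t m q) :
    nuc4 T ≤ ∑ m, |lam m| := by
  let e := (Fintype.equivFin ι).symm
  refine csInf_le ⟨0, ?_⟩ ⟨Fintype.card ι, lam ∘ e, u ∘ e, v ∘ e, w ∘ e, t ∘ e,
    fun m => hu _, fun m => hv _, fun m => hw _, fun m => ht _, fun i j p q => ?_, ?_⟩
  · rintro s ⟨r, lam, u, v, w, t, -, -, -, -, -, rfl⟩
    positivity
  · rw [hT]
    exact (e.sum_comp fun m => lam m * u m i * v m j * w m p * t m q).symm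
  · exact (e.sum_comp fun m => |lam m|).symm

theorem abs_sum_mul_le_one {ι : Type*} [Fintype ι] {x y : ι → ℝ}
    (hx : ∑ i, x i ^ 2 = 1) (hy : ∑ i, y i ^ 2 = 1) : |∑ i, x i * y i| ≤ 1 := by
  rw [← sq_le_one_iff_abs_le_one]
  simpa [hx, hy] using Finset.sum_mul_sq_le_sq_mul_sq Finset.univ x y

theorem T3_eq_sum {r : ℕ} {A : Fin d1 → Fin d2 → Fin d3 → ℝ} {lam : Fin r → ℝ}
    {u : Fin r → Fin d1 → ℝ} {v : Fin r → Fin d2 → ℝ} {w : Fin r → Fin d3 → ℝ}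
    (hA : ∀ i j k, A i j k = ∑ m, lam m * u m i * v m j * w m k) (i : Fin d1) (j : Fin d2)
    (p : Fin d1) (q : Fin d2) :
    T3 A i j p q = ∑ mn : Fin r × Fin r,
      lam mn.1 * lam mn.2 * (∑ k, w mn.1 k * w mn.2 k) *
        u mn.1 i * v mn.1 j * u mn.2 p * v mn.2 q := by
  simp only [T3, hA, Finset.sum_mul_sum]
  simp only [Finset.mul_sum, Finset.sum_mul, Fintype.sum_prod_type]
  rw [Finset.sum_comm]
  refine Finset.sum_congr rfl fun m _ => ?_
  rw [Finset.sum_comm]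
  exact Finset.sum_congr rfl fun n _ => Finset.sum_congr rfl fun k _ => by ring

theorem sum_abs_mul_mul_le_sq {ι : Type*} [Fintype ι] (lam : ι → ℝ) {c : ι → ι → ℝ}
    (hc : ∀ m n, |c m n| ≤ 1) :
    ∑ mn : ι × ι, |lam mn.1 * lam mn.2 * c mn.1 mn.2| ≤ (∑ m, |lam m|) ^ 2 :=
  calc ∑ mn : ι × ι, |lam mn.1 * lam mn.2 * c mn.1 mn.2|
      ≤ ∑ mn : ι × ι, |lam mn.1| * |lam mn.2| := Finset.sum_le_sum fun mn _ => by
        rw [abs_mul, abs_mul]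
        exact mul_le_of_le_one_right (by positivity) (hc _ _)
    _ = (∑ m, |lam m|) ^ 2 := by rw [Fintype.sum_prod_type, sq, Finset.sum_mul_sum]

theorem nuc4_T3_le_sq_of_mem_nuc3Set {A : Fin d1 → Fin d2 → Fin d3 → ℝ} {s : ℝ}
    (hs : s ∈ nuc3Set A) : nuc4 (T3 A) ≤ s ^ 2 := by
  obtain ⟨r, lam, u, v, w, hu, hv, hw, hA, rfl⟩ := hs
  calc nuc4 (T3 A)
      ≤ ∑ mn : Fin r × Fin r, |lam mn.1 * lam mn.2 * ∑ k, w mn.1 k * w mn.2 k| :=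
        nuc4_le_sum_abs _ (fun mn => u mn.1) (fun mn => v mn.1) (fun mn => u mn.2)
          (fun mn => v mn.2) (fun _ => hu _) (fun _ => hv _) (fun _ => hu _) (fun _ => hv _)
          (T3_eq_sum hA)
    _ ≤ (∑ m, |lam m|) ^ 2 :=
        sum_abs_mul_mul_le_sq lam fun m n => abs_sum_mul_le_one (hw m) (hw n)

end NuclearNorm

open NuclearNorm in
theorem stmt11 {d1 d2 d3 : ℕ} (A : Fin d1 → Fin d2 → Fin d3 → ℝ) :
    nuc3 A ^ 2 ≥ nuc4 (T3 A) := by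
  have hsqrt_le : √(nuc4 (T3 A)) ≤ nuc3 A :=
    le_csInf (nuc3Set_nonempty A) fun s hs =>
      Real.sqrt_le_iff.2 ⟨nonneg_of_mem_nuc3Set hs, nuc4_T3_le_sq_of_mem_nuc3Set hs⟩
  exact (Real.sqrt_le_iff.1 hsqrt_le).2
end
end

section
/- For A ∈ ℝ^{d1×d2×d3}, the d1 × d1 matrix B^{(1)} with entries b_{ij} = ∑_{k=1}^{d2} ∑_{l=1}^{d3} a_{ikl} a_{jkl} is symmetric positive semi-definite, and the square root of its spectral radius is an upper bound for the spectral norm of A: ‖A‖ ≤ √ρ(B^{(1)}). -/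
noncomputable section

/-- The spectral norm of a third order tensor. -/
noncomputable def specA {d1 d2 d3 : ℕ} (A : Fin d1 → Fin d2 → Fin d3 → ℝ) : ℝ :=
  sSup { r : ℝ | ∃ x : Fin d1 → ℝ, ∃ y : Fin d2 → ℝ, ∃ z : Fin d3 → ℝ,
    (∑ i, x i ^ 2 = 1) ∧ (∑ j, y j ^ 2 = 1) ∧ (∑ k, z k ^ 2 = 1) ∧
    r = ∑ i, ∑ j, ∑ k, A i j k * x i * y j * z k }

/-- Spectral radius of a symmetric matrix, as the maximum of `|sᵀ M s|` over unit vectors. -/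
noncomputable def raySup {n : Type*} [Fintype n] (M : Matrix n n ℝ) : ℝ :=
  sSup { r : ℝ | ∃ s : n → ℝ, (∑ i, s i ^ 2 = 1) ∧ r = |∑ i, ∑ j, M i j * s i * s j| }

/-- Contraction of `A` with itself on the second and third indices. -/
def B1 {d1 d2 d3 : ℕ} (A : Fin d1 → Fin d2 → Fin d3 → ℝ) : Matrix (Fin d1) (Fin d1) ℝ :=
  Matrix.of fun i j => ∑ k, ∑ l, A i k l * A j k l

lemma quad_eq {d1 d2 d3 : ℕ} (A : Fin d1 → Fin d2 → Fin d3 → ℝ) (x : Fin d1 → ℝ) :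
    ∑ i, ∑ j, B1 A i j * x i * x j = ∑ k, ∑ l, (∑ i, A i k l * x i) ^ 2 := by
  have step1 : ∑ i, ∑ j, B1 A i j * x i * x j
      = ∑ i, ∑ j, ∑ k, ∑ l, (A i k l * x i) * (A j k l * x j) := by
    refine Finset.sum_congr rfl fun i _ => Finset.sum_congr rfl fun j _ => ?_
    simp only [B1, Matrix.of_apply, Finset.sum_mul]
    refine Finset.sum_congr rfl fun k _ => Finset.sum_congr rfl fun l _ => ?_
    ring
  rw [step1]
  have step2 : ∑ i : Fin d1, ∑ j : Fin d1, ∑ k : Fin d2, ∑ l : Fin d3,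
      (A i k l * x i) * (A j k l * x j)
      = ∑ i : Fin d1, ∑ k : Fin d2, ∑ l : Fin d3, ∑ j : Fin d1,
      (A i k l * x i) * (A j k l * x j) := by
    refine Finset.sum_congr rfl fun i _ => ?_
    rw [Finset.sum_comm]
    exact Finset.sum_congr rfl fun k _ => Finset.sum_comm
  rw [step2, Finset.sum_comm]
  refine Finset.sum_congr rfl fun k _ => ?_
  rw [Finset.sum_comm]
  refine Finset.sum_congr rfl fun l _ => ?_
  rw [sq, Finset.sum_mul_sum]

lemma raySup_bdd {n : Type*} [Fintype n] (M : Matrix n n ℝ) :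
    BddAbove { r : ℝ | ∃ s : n → ℝ, (∑ i, s i ^ 2 = 1) ∧
      r = |∑ i, ∑ j, M i j * s i * s j| } := by
  refine ⟨∑ i, ∑ j, |M i j|, ?_⟩
  rintro r ⟨s, hs, rfl⟩
  have habs : ∀ i, |s i| ≤ 1 := by
    intro i
    have h1 : s i ^ 2 ≤ 1 := by
      rw [← hs]
      exact Finset.single_le_sum (fun j _ => sq_nonneg (s j)) (Finset.mem_univ i)
    nlinarith [abs_nonneg (s i), sq_abs (s i)]
  calc |∑ i, ∑ j, M i j * s i * s j| ≤ ∑ i, |∑ j, M i j * s i * s j| :=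
        Finset.abs_sum_le_sum_abs _ _
    _ ≤ ∑ i, ∑ j, |M i j * s i * s j| :=
        Finset.sum_le_sum fun i _ => Finset.abs_sum_le_sum_abs _ _
    _ ≤ ∑ i, ∑ j, |M i j| := by
        refine Finset.sum_le_sum fun i _ => Finset.sum_le_sum fun j _ => ?_
        rw [abs_mul, abs_mul]
        calc |M i j| * |s i| * |s j| ≤ |M i j| * 1 * 1 := by
              have h1 : |M i j| * |s i| ≤ |M i j| * 1 :=
                mul_le_mul_of_nonneg_left (habs i) (abs_nonneg _)
              have h2 : |M i j| * |s i| * |s j| ≤ (|M i j| * 1) * 1 :=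
                mul_le_mul h1 (habs j) (abs_nonneg _)
                  (by positivity)
              linarith
          _ = |M i j| := by ring

theorem stmt15 {d1 d2 d3 : ℕ} (A : Fin d1 → Fin d2 → Fin d3 → ℝ) :
    (B1 A).IsSymm ∧ (B1 A).PosSemidef ∧ specA A ≤ Real.sqrt (raySup (B1 A)) := by
  have hsymm : (B1 A).IsSymm := by
    ext i j
    simp only [B1, Matrix.transpose_apply, Matrix.of_apply]
    exact Finset.sum_congr rfl fun k _ => Finset.sum_congr rfl fun l _ => mul_comm _ _
  refine ⟨hsymm, Matrix.PosSemidef.of_dotProduct_mulVec_nonneg hsymm ?_, ?_⟩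
  · intro x
    have hq : dotProduct (star x) ((B1 A).mulVec x) = ∑ i, ∑ j, B1 A i j * x i * x j := by
      simp only [dotProduct, Matrix.mulVec, star, Pi.star_apply, star_trivial, id_eq,
        Finset.mul_sum]
      refine Finset.sum_congr rfl fun i _ => Finset.sum_congr rfl fun j _ => ?_
      ring
    rw [hq, quad_eq]
    positivity
  · apply Real.sSup_le _ (Real.sqrt_nonneg _)
    rintro r ⟨x, y, z, hx, hy, hz, rfl⟩
    set w : Fin d2 → Fin d3 → ℝ := fun k l => ∑ i, A i k l * x i with hw
    have hr : ∑ i, ∑ j, ∑ k, A i j k * x i * y j * z k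
        = ∑ p : Fin d2 × Fin d3, w p.1 p.2 * (y p.1 * z p.2) := by
      rw [Fintype.sum_prod_type]
      rw [Finset.sum_comm]
      refine Finset.sum_congr rfl fun j _ => ?_
      rw [Finset.sum_comm]
      refine Finset.sum_congr rfl fun k _ => ?_
      simp only [hw, Finset.sum_mul]
      refine Finset.sum_congr rfl fun i _ => by ring
    have hquad : ∑ p : Fin d2 × Fin d3, w p.1 p.2 ^ 2 ≤ raySup (B1 A) := by
      have h1 : ∑ p : Fin d2 × Fin d3, w p.1 p.2 ^ 2
          = ∑ i, ∑ j, B1 A i j * x i * x j := by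
        rw [quad_eq, Fintype.sum_prod_type]
      rw [h1]
      refine le_trans (le_abs_self _) (le_csSup (raySup_bdd _) ⟨x, hx, rfl⟩)
    have hyz : ∑ p : Fin d2 × Fin d3, (y p.1 * z p.2) ^ 2 = 1 := by
      rw [Fintype.sum_prod_type]
      simp only [mul_pow]
      rw [← Finset.sum_mul_sum, hy, hz, mul_one]
    have hcs := Finset.sum_mul_sq_le_sq_mul_sq Finset.univ
      (fun p : Fin d2 × Fin d3 => w p.1 p.2) (fun p => y p.1 * z p.2)
    rw [hyz, mul_one] at hcs
    have hr2 : (∑ i, ∑ j, ∑ k, A i j k * x i * y j * z k) ^ 2 ≤ raySup (B1 A) := by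
      rw [hr]; exact le_trans hcs hquad
    calc ∑ i, ∑ j, ∑ k, A i j k * x i * y j * z k
        ≤ |∑ i, ∑ j, ∑ k, A i j k * x i * y j * z k| := le_abs_self _
      _ = Real.sqrt ((∑ i, ∑ j, ∑ k, A i j k * x i * y j * z k) ^ 2) :=
          (Real.sqrt_sq_eq_abs _).symm
      _ ≤ Real.sqrt (raySup (B1 A)) := Real.sqrt_le_sqrt hr2
end
end

section
/- Let A ∈ ℝ^{d1×d2×d3}, let B^{(1)} be the d1 × d1 matrix with entries b_{ij} = ∑_{k,l} a_{ikl} a_{jkl}, and let L = max_j max{ ∑_{i,p} (∑_k a_{ijk} a_{pjk}) x_i x_p : ‖x‖ = 1 }. Then (1/d2) ρ(B^{(1)}) ≤ L ≤ ‖A‖² ≤ ρ(B^{(1)}) ≤ d2 · L. -/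
noncomputable section

/-!
Write `A_j = (a_{ijk})_{i,k}` for the slices of `A`, so that `B⁽¹⁾ = ∑_j A_j A_jᵀ` and
`xᵀ B⁽¹⁾ x = ∑_j ‖A_jᵀ x‖²`, while `A(x, y, z) = ∑_j y_j ⟨z, A_jᵀ x⟩`. Cauchy–Schwarz in `y` and
then in `z` gives `A(x, y, z)² ≤ xᵀ B⁽¹⁾ x`, hence `‖A‖² ≤ ρ(B⁽¹⁾)`. Conversely `y = e_j` and
`z = A_jᵀ x / ‖A_jᵀ x‖` show `‖A_jᵀ x‖ ≤ ‖A‖`, i.e. `ρ(A_j A_jᵀ) ≤ ‖A‖²`, so `L ≤ ‖A‖²`. Finally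
`ρ` is subadditive, so `ρ(B⁽¹⁾) ≤ ∑_j ρ(A_j A_jᵀ) ≤ d₂ L`, which also gives the first inequality.
-/

open Finset

section UnitVectors

variable {ι : Type*} [Fintype ι]

lemma abs_le_one_of_sum_sq_eq_one {x : ι → ℝ} (hx : ∑ i, x i ^ 2 = 1) (i : ι) : |x i| ≤ 1 :=
  (sq_le_one_iff_abs_le_one _).1 <|
    hx ▸ single_le_sum (fun j _ => sq_nonneg (x j)) (mem_univ i)

lemma sq_sum_mul_le_of_sum_sq_eq_one {x : ι → ℝ} (hx : ∑ i, x i ^ 2 = 1) (a : ι → ℝ) :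
    (∑ i, x i * a i) ^ 2 ≤ ∑ i, a i ^ 2 := by
  simpa [hx] using sum_mul_sq_le_sq_mul_sq univ x a

lemma sum_sq_le_sq_of_forall_sum_mul_le (v : ι → ℝ) {c : ℝ}
    (h : ∀ z : ι → ℝ, ∑ k, z k ^ 2 = 1 → ∑ k, z k * v k ≤ c) : ∑ k, v k ^ 2 ≤ c ^ 2 := by
  have hs : 0 ≤ ∑ k, v k ^ 2 := by positivity
  rcases hs.eq_or_lt with hs0 | hspos
  · rw [← hs0]
    positivity
  set n := √(∑ k, v k ^ 2)
  have hnpos : 0 < n := Real.sqrt_pos.2 hspos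
  have hn : n ^ 2 = ∑ k, v k ^ 2 := Real.sq_sqrt hs
  have hz : ∑ k, (v k / n) ^ 2 = 1 := by
    simp_rw [div_pow, ← sum_div, ← hn]
    exact div_self (by positivity)
  have hvz : ∑ k, v k / n * v k = n := by
    simp_rw [div_mul_eq_mul_div, ← sq, ← sum_div, ← hn]
    field_simp
  have hnc : n ≤ c := hvz ▸ h _ hz
  rw [← hn]
  exact pow_le_pow_left₀ hnpos.le hnc 2

end UnitVectors

lemma sSup_nonneg_of_neg_mem {S : Set ℝ} (hneg : ∀ r ∈ S, -r ∈ S) : 0 ≤ sSup S := by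
  rcases S.eq_empty_or_nonempty with rfl | ⟨r, hr⟩
  · exact Real.sSup_empty.ge
  · rcases le_total 0 r with h0 | h0
    · exact Real.sSup_nonneg' ⟨r, hr, h0⟩
    · exact Real.sSup_nonneg' ⟨-r, hneg r hr, neg_nonneg.2 h0⟩

section RaySup

variable {n : Type*} [Fintype n]

lemma abs_sum_sum_mul_le (M : Matrix n n ℝ) {x : n → ℝ} (hx : ∑ i, x i ^ 2 = 1) :
    |∑ i, ∑ j, M i j * x i * x j| ≤ ∑ i, ∑ j, |M i j| := by
  refine (abs_sum_le_sum_abs _ _).trans <| sum_le_sum fun i _ =>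
    (abs_sum_le_sum_abs _ _).trans <| sum_le_sum fun j _ => ?_
  calc |M i j * x i * x j| = |M i j| * |x i| * |x j| := by rw [abs_mul, abs_mul]
    _ ≤ |M i j| * 1 * 1 := by
      gcongr <;> exact abs_le_one_of_sum_sq_eq_one hx _
    _ = |M i j| := by ring

lemma le_raySup (M : Matrix n n ℝ) {x : n → ℝ} (hx : ∑ i, x i ^ 2 = 1) :
    |∑ i, ∑ j, M i j * x i * x j| ≤ raySup M :=
  le_csSup ⟨_, by rintro r ⟨s, hs, rfl⟩; exact abs_sum_sum_mul_le M hs⟩ ⟨x, hx, rfl⟩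

lemma raySup_nonneg (M : Matrix n n ℝ) : 0 ≤ raySup M :=
  Real.sSup_nonneg <| by rintro r ⟨s, -, rfl⟩; exact abs_nonneg _

lemma sum_sum_finset_sum_apply_mul_mul {β : Type*} (s : Finset β) (M : β → Matrix n n ℝ) (x : n → ℝ) :
    ∑ i, ∑ j, (∑ b ∈ s, M b) i j * x i * x j = ∑ b ∈ s, ∑ i, ∑ j, M b i j * x i * x j := by
  simp only [Matrix.sum_apply, sum_mul]
  conv_rhs => rw [Finset.sum_comm]; enter [2, i]; rw [Finset.sum_comm]

lemma raySup_sum_le {β : Type*} (s : Finset β) (M : β → Matrix n n ℝ) :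
    raySup (∑ b ∈ s, M b) ≤ ∑ b ∈ s, raySup (M b) := by
  refine Real.sSup_le ?_ (sum_nonneg fun b _ => raySup_nonneg _)
  rintro r ⟨x, hx, rfl⟩
  rw [sum_sum_finset_sum_apply_mul_mul]
  exact (abs_sum_le_sum_abs _ _).trans (sum_le_sum fun b _ => le_raySup _ hx)

end RaySup

section Tensor

variable {d1 d2 d3 : ℕ} (A : Fin d1 → Fin d2 → Fin d3 → ℝ)

def sliceGram (j : Fin d2) : Matrix (Fin d1) (Fin d1) ℝ :=
  Matrix.of fun i p => ∑ k, A i j k * A p j k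

lemma sliceGram_quad_eq (j : Fin d2) (x : Fin d1 → ℝ) :
    ∑ i, ∑ p, sliceGram A j i p * x i * x p = ∑ k, (∑ i, A i j k * x i) ^ 2 := by
  simp only [sq, sum_mul_sum]
  simp only [sliceGram, Matrix.of_apply, sum_mul]
  conv_rhs => rw [Finset.sum_comm]; enter [2, i]; rw [Finset.sum_comm]
  refine Finset.sum_congr rfl fun i _ => Finset.sum_congr rfl fun p _ =>
    Finset.sum_congr rfl fun k _ => ?_
  ring

lemma B1_eq_sum_sliceGram : B1 A = ∑ j, sliceGram A j := by
  ext i p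
  simp [B1, sliceGram, Matrix.sum_apply]

lemma sliceGram_quad_nonneg (j : Fin d2) (x : Fin d1 → ℝ) :
    0 ≤ ∑ i, ∑ p, sliceGram A j i p * x i * x p := by
  rw [sliceGram_quad_eq]
  positivity

lemma trilinear_eq (x : Fin d1 → ℝ) (y : Fin d2 → ℝ) (z : Fin d3 → ℝ) :
    ∑ i, ∑ j, ∑ k, A i j k * x i * y j * z k = ∑ j, y j * ∑ k, z k * ∑ i, A i j k * x i := by
  simp only [mul_sum]
  rw [Finset.sum_comm]
  refine Finset.sum_congr rfl fun j _ => ?_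
  rw [Finset.sum_comm]
  refine Finset.sum_congr rfl fun k _ => Finset.sum_congr rfl fun i _ => ?_
  ring

lemma sq_trilinear_le {x : Fin d1 → ℝ} {y : Fin d2 → ℝ} {z : Fin d3 → ℝ}
    (hy : ∑ j, y j ^ 2 = 1) (hz : ∑ k, z k ^ 2 = 1) :
    (∑ i, ∑ j, ∑ k, A i j k * x i * y j * z k) ^ 2 ≤ ∑ i, ∑ p, B1 A i p * x i * x p := by
  rw [trilinear_eq, B1_eq_sum_sliceGram, sum_sum_finset_sum_apply_mul_mul]
  refine (sq_sum_mul_le_of_sum_sq_eq_one hy _).trans (sum_le_sum fun j _ => ?_)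
  rw [sliceGram_quad_eq]
  exact sq_sum_mul_le_of_sum_sq_eq_one hz _

lemma trilinear_le_sqrt_raySup {x : Fin d1 → ℝ} {y : Fin d2 → ℝ} {z : Fin d3 → ℝ}
    (hx : ∑ i, x i ^ 2 = 1) (hy : ∑ j, y j ^ 2 = 1) (hz : ∑ k, z k ^ 2 = 1) :
    ∑ i, ∑ j, ∑ k, A i j k * x i * y j * z k ≤ √(raySup (B1 A)) :=
  Real.le_sqrt_of_sq_le <| (sq_trilinear_le A hy hz).trans <|
    (le_abs_self _).trans (le_raySup _ hx)

lemma le_specA {x : Fin d1 → ℝ} {y : Fin d2 → ℝ} {z : Fin d3 → ℝ}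
    (hx : ∑ i, x i ^ 2 = 1) (hy : ∑ j, y j ^ 2 = 1) (hz : ∑ k, z k ^ 2 = 1) :
    ∑ i, ∑ j, ∑ k, A i j k * x i * y j * z k ≤ specA A :=
  le_csSup ⟨_, by rintro r ⟨x, y, z, hx, hy, hz, rfl⟩; exact trilinear_le_sqrt_raySup A hx hy hz⟩
    ⟨x, y, z, hx, hy, hz, rfl⟩

lemma specA_nonneg : 0 ≤ specA A := by
  refine sSup_nonneg_of_neg_mem ?_
  rintro r ⟨x, y, z, hx, hy, hz, rfl⟩
  exact ⟨-x, y, z, by simpa using hx, hy, hz, by simp [sum_neg_distrib]⟩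

lemma specA_sq_le_raySup : specA A ^ 2 ≤ raySup (B1 A) := by
  have h : specA A ≤ √(raySup (B1 A)) := Real.sSup_le
    (by rintro r ⟨x, y, z, hx, hy, hz, rfl⟩; exact trilinear_le_sqrt_raySup A hx hy hz)
    (Real.sqrt_nonneg _)
  exact (Real.le_sqrt (specA_nonneg A) (raySup_nonneg _)).1 h

lemma raySup_sliceGram_le_specA_sq (j : Fin d2) : raySup (sliceGram A j) ≤ specA A ^ 2 := by
  refine Real.sSup_le ?_ (sq_nonneg _)
  rintro r ⟨x, hx, rfl⟩
  rw [abs_of_nonneg (sliceGram_quad_nonneg A j x), sliceGram_quad_eq]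
  refine sum_sq_le_sq_of_forall_sum_mul_le _ fun z hz => ?_
  have h := le_specA A hx (y := Pi.single j 1) (by simp [Pi.single_apply]) hz
  rw [trilinear_eq] at h
  simpa [Pi.single_apply] using h

lemma sSup_sliceQuad_eq_raySup (j : Fin d2) :
    sSup {t : ℝ | ∃ x : Fin d1 → ℝ, (∑ i, x i ^ 2 = 1) ∧
      t = ∑ i, ∑ p, (∑ k, A i j k * A p j k) * x i * x p} = raySup (sliceGram A j) := by
  unfold raySup
  congr 1
  ext t
  refine exists_congr fun x => and_congr_right fun _ => ?_
  rw [abs_of_nonneg (sliceGram_quad_nonneg A j x)]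
  rfl

end Tensor

theorem stmt18 {d1 d2 d3 : ℕ} (A : Fin d1 → Fin d2 → Fin d3 → ℝ)
    (L : ℝ)
    (hL : L = sSup { r : ℝ | ∃ j : Fin d2,
      r = sSup { t : ℝ | ∃ x : Fin d1 → ℝ, (∑ i, x i ^ 2 = 1) ∧
        t = ∑ i, ∑ p, (∑ k, A i j k * A p j k) * x i * x p } }) :
    (1 / (d2 : ℝ)) * raySup (B1 A) ≤ L ∧ L ≤ specA A ^ 2 ∧
      specA A ^ 2 ≤ raySup (B1 A) ∧ raySup (B1 A) ≤ (d2 : ℝ) * L := by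
  have hL_iSup : L = ⨆ j, raySup (sliceGram A j) := by
    simp_rw [hL, sSup_sliceQuad_eq_raySup, iSup]
    congr 1
    ext r
    exact exists_congr fun j => eq_comm
  have hL0 : 0 ≤ L := hL_iSup ▸ Real.iSup_nonneg fun j => raySup_nonneg _
  have hslice (j : Fin d2) : raySup (sliceGram A j) ≤ L :=
    hL_iSup ▸ le_ciSup (Finite.bddAbove_range fun j => raySup (sliceGram A j)) j
  have hB1 : raySup (B1 A) ≤ d2 * L := calc
    raySup (B1 A) ≤ ∑ j, raySup (sliceGram A j) := B1_eq_sum_sliceGram A ▸ raySup_sum_le _ _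
    _ ≤ ∑ _j : Fin d2, L := sum_le_sum fun j _ => hslice j
    _ = d2 * L := by simp
  refine ⟨?_, ?_, specA_sq_le_raySup A, hB1⟩
  · rw [one_div_mul_eq_div]
    exact div_le_of_le_mul₀ (Nat.cast_nonneg _) hL0 (by linarith)
  · rw [hL_iSup]
    exact Real.iSup_le (raySup_sliceGram_le_specA_sq A) (sq_nonneg _)
end
end

section
/- For a biquadratic tensor T ∈ ℝ^{d1×d2×d1×d2} with symmetric matrix unfolding T (the d1d2 × d1d2 matrix with entries T_{⟨ij⟩,⟨pq⟩} = t_{ijpq}), the matrix nuclear norm is a lower bound for the tensor nuclear norm: ‖T‖_* (matrix) ≤ ‖T‖_* (tensor). -/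
noncomputable section

/-- Matrix unfolding of a fourth order tensor of size `d1 × d2 × d1 × d2`. -/
def unfoldB {d1 d2 : ℕ} (T : Fin d1 → Fin d2 → Fin d1 → Fin d2 → ℝ) :
    Matrix (Fin d1 × Fin d2) (Fin d1 × Fin d2) ℝ :=
  Matrix.of fun a b => T a.1 a.2 b.1 b.2

open scoped RealInnerProductSpace

private lemma single_sq_sum {d : ℕ} (i : Fin d) :
    ∑ k, (Pi.single i 1 : Fin d → ℝ) k ^ 2 = 1 := by
  simp [Pi.single_apply]

/-- The set defining `nuc4` is nonempty. -/
private lemma nuc4_set_nonempty {d1 d2 : ℕ} (T : Fin d1 → Fin d2 → Fin d1 → Fin d2 → ℝ) :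
    { s : ℝ | ∃ r : ℕ, ∃ lam : Fin r → ℝ, ∃ u : Fin r → Fin d1 → ℝ,
    ∃ v : Fin r → Fin d2 → ℝ, ∃ w : Fin r → Fin d1 → ℝ, ∃ t : Fin r → Fin d2 → ℝ,
    (∀ m, ∑ i, u m i ^ 2 = 1) ∧ (∀ m, ∑ j, v m j ^ 2 = 1) ∧
    (∀ m, ∑ i, w m i ^ 2 = 1) ∧ (∀ m, ∑ j, t m j ^ 2 = 1) ∧
    (∀ i j p q, T i j p q = ∑ m, lam m * u m i * v m j * w m p * t m q) ∧
    s = ∑ m, |lam m| }.Nonempty := by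
  classical
  set e := Fintype.equivFin (Fin d1 × Fin d2 × Fin d1 × Fin d2) with he
  refine ⟨∑ m, |T (e.symm m).1 (e.symm m).2.1 (e.symm m).2.2.1 (e.symm m).2.2.2|,
    Fintype.card (Fin d1 × Fin d2 × Fin d1 × Fin d2),
    fun m => T (e.symm m).1 (e.symm m).2.1 (e.symm m).2.2.1 (e.symm m).2.2.2,
    fun m => (Pi.single (e.symm m).1 1 : Fin d1 → ℝ),
    fun m => (Pi.single (e.symm m).2.1 1 : Fin d2 → ℝ),
    fun m => (Pi.single (e.symm m).2.2.1 1 : Fin d1 → ℝ),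
    fun m => (Pi.single (e.symm m).2.2.2 1 : Fin d2 → ℝ),
    fun m => single_sq_sum _, fun m => single_sq_sum _,
    fun m => single_sq_sum _, fun m => single_sq_sum _, ?_, rfl⟩
  intro i j p q
  refine Eq.trans ?_ (Fintype.sum_equiv e.symm _
    (fun x : Fin d1 × Fin d2 × Fin d1 × Fin d2 =>
      T x.1 x.2.1 x.2.2.1 x.2.2.2 *
        (Pi.single x.1 1 : Fin d1 → ℝ) i *
        (Pi.single x.2.1 1 : Fin d2 → ℝ) j *
        (Pi.single x.2.2.1 1 : Fin d1 → ℝ) p *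
        (Pi.single x.2.2.2 1 : Fin d2 → ℝ) q)
    (fun m => rfl)).symm
  simp [Fintype.sum_prod_type, Pi.single_apply, mul_ite, ite_mul,
    Finset.sum_ite_eq, Finset.sum_ite_eq']

theorem stmt19 {d1 d2 : ℕ} (T : Fin d1 → Fin d2 → Fin d1 → Fin d2 → ℝ)
    (hT : Biquadratic T) (hH : (unfoldB T).IsHermitian) :
    ∑ i, |hH.eigenvalues i| ≤ nuc4 T := by
  classical
  rw [nuc4]
  refine le_csInf (nuc4_set_nonempty T) ?_
  rintro s ⟨r, lam, u, v, w, t, hu, hv, hw, ht, hdec, rfl⟩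
  set n := Fin d1 × Fin d2
  set E := hH.eigenvectorBasis with hE
  set a : Fin r → EuclideanSpace ℝ n := fun m => WithLp.toLp 2 (fun x : n => u m x.1 * v m x.2) with ha
  set b : Fin r → EuclideanSpace ℝ n := fun m => WithLp.toLp 2 (fun x : n => w m x.1 * t m x.2) with hb
  set A : Fin r → n → ℝ := fun m i => ∑ x : n, a m x * E i x with hA
  set B : Fin r → n → ℝ := fun m i => ∑ x : n, b m x * E i x with hB
  have inner_eq : ∀ (c d : EuclideanSpace ℝ n), ⟪c, d⟫ = ∑ x : n, c x * d x := by
    intro c d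
    simp [PiLp.inner_apply, RCLike.inner_apply, conj_trivial]
    exact Finset.sum_congr rfl fun x _ => mul_comm _ _
  -- Parseval
  have parseval : ∀ (c : EuclideanSpace ℝ n),
      ∑ i : n, (∑ x : n, c x * E i x) ^ 2 = ∑ x : n, c x ^ 2 := by
    intro c
    have h := E.sum_inner_mul_inner c c
    have h2 : ∀ i : n, ⟪c, E i⟫ * ⟪E i, c⟫ = (∑ x : n, c x * E i x) ^ 2 := by
      intro i
      rw [real_inner_comm c (E i), inner_eq, sq]
    rw [Finset.sum_congr rfl fun i _ => h2 i] at h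
    rw [h, inner_eq c c]
    exact Finset.sum_congr rfl fun x _ => (sq (c x)) ▸ rfl
  have normsq : ∀ (x1 : Fin d1 → ℝ) (x2 : Fin d2 → ℝ),
      ∑ x : n, (x1 x.1 * x2 x.2) ^ 2 = (∑ i, x1 i ^ 2) * (∑ j, x2 j ^ 2) := by
    intro x1 x2
    rw [Finset.sum_mul_sum, Fintype.sum_prod_type]
    exact Finset.sum_congr rfl fun i _ => Finset.sum_congr rfl fun j _ => mul_pow _ _ _
  have pa : ∀ m, ∑ i : n, A m i ^ 2 = 1 := by
    intro m
    rw [hA]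
    simp only
    rw [parseval (a m), ha]
    simp only
    rw [normsq, hu, hv]; ring
  have pb : ∀ m, ∑ i : n, B m i ^ 2 = 1 := by
    intro m
    rw [hB]
    simp only
    rw [parseval (b m), hb]
    simp only
    rw [normsq, hw, ht]; ring
  -- eigenvalue identity
  have key : ∀ i : n, hH.eigenvalues i = ∑ m, lam m * A m i * B m i := by
    intro i
    have he := hH.mulVec_eigenvectorBasis i
    have hnorm : ∑ x : n, E i x ^ 2 = 1 := by
      have h1 : ⟪E i, E i⟫ = (1 : ℝ) := by
        rw [real_inner_self_eq_norm_sq, E.orthonormal.1 i]; norm_num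
      rw [inner_eq (E i) (E i)] at h1
      rw [← h1]
      exact Finset.sum_congr rfl fun x _ => sq (E i x) ▸ rfl
    have h2 : ∑ x : n, E i x * ((unfoldB T).mulVec ⇑(E i)) x = hH.eigenvalues i := by
      rw [he]
      simp only [Pi.smul_apply, smul_eq_mul]
      calc ∑ x : n, E i x * (hH.eigenvalues i * E i x)
          = hH.eigenvalues i * ∑ x : n, E i x ^ 2 := by
            rw [Finset.mul_sum]; exact Finset.sum_congr rfl fun x _ => by ring
        _ = hH.eigenvalues i := by rw [hnorm, mul_one]
    rw [← h2]
    have hM : ∀ x y : n, unfoldB T x y = ∑ m, lam m * u m x.1 * v m x.2 * w m y.1 * t m y.2 :=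
      fun x y => hdec x.1 x.2 y.1 y.2
    calc ∑ x : n, E i x * ((unfoldB T).mulVec ⇑(E i)) x
        = ∑ x : n, ∑ y : n, ∑ m, E i x *
            ((lam m * u m x.1 * v m x.2 * w m y.1 * t m y.2) * E i y) := by
          simp only [Matrix.mulVec, dotProduct]
          refine Finset.sum_congr rfl fun x _ => ?_
          rw [Finset.mul_sum]
          refine Finset.sum_congr rfl fun y _ => ?_
          rw [hM, Finset.sum_mul, Finset.mul_sum]
      _ = ∑ x : n, ∑ m, ∑ y : n, E i x *
            ((lam m * u m x.1 * v m x.2 * w m y.1 * t m y.2) * E i y) :=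
          Finset.sum_congr rfl fun x _ => Finset.sum_comm
      _ = ∑ m, ∑ x : n, ∑ y : n, E i x *
            ((lam m * u m x.1 * v m x.2 * w m y.1 * t m y.2) * E i y) :=
          Finset.sum_comm
      _ = ∑ m, lam m * A m i * B m i := by
          refine Finset.sum_congr rfl fun m _ => ?_
          rw [hA, hB]
          simp only
          rw [mul_assoc, Finset.sum_mul_sum, Finset.mul_sum]
          refine Finset.sum_congr rfl fun x _ => ?_
          rw [Finset.mul_sum]
          refine Finset.sum_congr rfl fun y _ => ?_
          ring
  -- final estimate
  calc ∑ i : n, |hH.eigenvalues i|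
      ≤ ∑ i : n, ∑ m, |lam m| * (|A m i| * |B m i|) := by
        refine Finset.sum_le_sum fun i _ => ?_
        rw [key i]
        refine (Finset.abs_sum_le_sum_abs _ _).trans (le_of_eq ?_)
        refine Finset.sum_congr rfl fun m _ => ?_
        rw [abs_mul, abs_mul, mul_assoc]
    _ = ∑ m, |lam m| * ∑ i : n, |A m i| * |B m i| := by
        rw [Finset.sum_comm]
        exact Finset.sum_congr rfl fun m _ => (Finset.mul_sum _ _ _).symm
    _ ≤ ∑ m, |lam m| * 1 := by
        refine Finset.sum_le_sum fun m _ => ?_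
        refine mul_le_mul_of_nonneg_left ?_ (abs_nonneg _)
        have hcs := Finset.sum_mul_sq_le_sq_mul_sq Finset.univ
          (fun i : n => |A m i|) (fun i : n => |B m i|)
        simp only [sq_abs] at hcs
        rw [pa m, pb m, mul_one] at hcs
        have hnn : (0:ℝ) ≤ ∑ i : n, |A m i| * |B m i| :=
          Finset.sum_nonneg fun i _ => mul_nonneg (abs_nonneg _) (abs_nonneg _)
        nlinarith [hcs, hnn]
    _ = ∑ m, |lam m| := by simp
end
end
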